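/- arXiv:math/9912120 — 8 statements merged into one kernel-verified Lean document; each statement's English description precedes it below -/
import Mathlib

section
/- A connected balanced bipartite graph G is α⁺-stable if and only if it admits a decomposition G = G₁ ∪ … ∪ G_k into induced subgraphs G_i whose vertex sets are pairwise disjoint and partition the vertex set of G, with every G_i bistable bipartite. -/
open SimpleGraph

/-- A stable (independent) set of vertices: pairwise nonadjacent. -/
def IsStableSet {V : Type*} (G : SimpleGraph V) (S : Set V) : Prop :=
  S.Pairwise fun u v => ¬ G.Adj u v

/-- The stability number `α(G)`: maximum cardinality of a stable set. -/
noncomputable def stabNum {V : Type*} (G : SimpleGraph V) : ℕ :=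
  sSup {k | ∃ S : Set V, IsStableSet G S ∧ S.ncard = k}

/-- A maximum stable set. -/
def IsMaxStableSet {V : Type*} (G : SimpleGraph V) (S : Set V) : Prop :=
  IsStableSet G S ∧ S.ncard = stabNum G

/-- `G` is α⁺-stable: adding any edge between nonadjacent vertices keeps α. -/
def AlphaPlusStable {V : Type*} (G : SimpleGraph V) : Prop :=
  ∀ x y : V, x ≠ y → ¬ G.Adj x y →
    stabNum (G ⊔ SimpleGraph.fromEdgeSet {s(x, y)}) = stabNum G

/-- `G` is α⁻-stable: deleting any edge keeps α. -/
def AlphaMinusStable {V : Type*} (G : SimpleGraph V) : Prop :=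
  ∀ e ∈ G.edgeSet, stabNum (G.deleteEdges {e}) = stabNum G

/-- `G` is α-stable: both α⁺-stable and α⁻-stable. -/
def AlphaStable {V : Type*} (G : SimpleGraph V) : Prop :=
  AlphaPlusStable G ∧ AlphaMinusStable G

/-- `{A, B}` is a bipartition of `G`. -/
def IsBipartition {V : Type*} (G : SimpleGraph V) (A B : Set V) : Prop :=
  Disjoint A B ∧ A ∪ B = Set.univ ∧
    ∀ ⦃x y⦄, G.Adj x y → (x ∈ A ∧ y ∈ B) ∨ (x ∈ B ∧ y ∈ A)

/-- `G` is bistable bipartite w.r.t. bipartition `{A, B}`: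
`A` and `B` are its only maximum stable sets. -/
def BistableBipartite {V : Type*} (G : SimpleGraph V) (A B : Set V) : Prop :=
  IsBipartition G A B ∧ ∀ S : Set V, IsMaxStableSet G S ↔ S = A ∨ S = B

/-- `G` has a perfect matching. -/
def HasPerfectMatching {V : Type*} (G : SimpleGraph V) : Prop :=
  ∃ M : G.Subgraph, M.IsPerfectMatching

/-- `X` has a `k` by `n - k` zero submatrix for some `1 ≤ k ≤ n - 1`. -/
def HasZeroSubmatrix {m : Type*} [Fintype m] (X : Matrix m m ℕ) : Prop :=
  ∃ R C : Finset m, R.Nonempty ∧ C.Nonempty ∧ R.card + C.card = Fintype.card m ∧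
    ∀ i ∈ R, ∀ j ∈ C, X i j = 0

/-- A square matrix is partly decomposable. -/
def PartlyDecomposable {m : Type*} [Fintype m] (X : Matrix m m ℕ) : Prop :=
  (Fintype.card m = 1 ∧ ∀ i j, X i j = 0) ∨ HasZeroSubmatrix X

/-- A square matrix is fully indecomposable iff it is not partly decomposable. -/
def FullyIndecomposable {m : Type*} [Fintype m] (X : Matrix m m ℕ) : Prop :=
  ¬ PartlyDecomposable X

/-- A (0,1)-matrix. -/
def ZeroOne {m k : Type*} (X : Matrix m k ℕ) : Prop :=
  ∀ i j, X i j = 0 ∨ X i j = 1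

/-- The term rank: maximal number of nonzero entries, no two on a line. -/
noncomputable def termRank {m k : Type*} [Fintype m] [Fintype k] (X : Matrix m k ℕ) : ℕ :=
  sSup {r | ∃ (f : Fin r ↪ m) (g : Fin r ↪ k), ∀ i, X (f i) (g i) ≠ 0}

/-- The permanent of a square matrix with natural entries. -/
def perm {m : Type*} [Fintype m] [DecidableEq m] (X : Matrix m m ℕ) : ℕ :=
  ∑ σ : Equiv.Perm m, ∏ i, X (σ i) i

/-- The bipartite graph whose reduced adjacency matrix is the (0,1)-matrix `X`. -/
def matGraph {ι κ : Type*} (X : Matrix ι κ ℕ) : SimpleGraph (ι ⊕ κ) :=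
  SimpleGraph.fromRel fun u v => ∃ i j, u = Sum.inl i ∧ v = Sum.inr j ∧ X i j = 1

/-!
A decomposition into bistable parts forces `2 α(G) ≤ |V| = |A| + |B|`, so `A` and `B` are both
maximum stable sets; a non-edge `xy` misses one of them, which stays stable in `G + xy`.

Conversely, in an α⁺-stable graph at most one vertex lies in every maximum stable set. If
`α(G) > |B|`, the `A`-parts of maximum stable sets are closed under intersection, and their least
member is a set of at least two vertices lying in every maximum stable set. Hence `α(G) = |B|`, so
Hall's condition holds and a perfect matching splits `G` into bistable edges.
-/

section

variable {V : Type*} {G H : SimpleGraph V} {S : Set V}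

lemma stabNum_le {m : ℕ} (h : ∀ S, IsStableSet G S → S.ncard ≤ m) : stabNum G ≤ m :=
  csSup_le ⟨0, ∅, Set.pairwise_empty _, Set.ncard_empty _⟩ (by rintro k ⟨S, hS, rfl⟩; exact h S hS)

lemma bddAbove_stableSetCards [Finite V] :
    BddAbove {k | ∃ S : Set V, IsStableSet G S ∧ S.ncard = k} :=
  ⟨Nat.card V, by rintro k ⟨S, -, rfl⟩; exact Set.ncard_le_card S⟩

lemma IsStableSet.ncard_le_stabNum [Finite V] (hS : IsStableSet G S) : S.ncard ≤ stabNum G :=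
  le_csSup bddAbove_stableSetCards ⟨S, hS, rfl⟩

lemma exists_isMaxStableSet [Finite V] (G : SimpleGraph V) : ∃ S, IsMaxStableSet G S := by
  obtain ⟨S, hS, hcard⟩ :=
    Nat.sSup_mem (s := {k | ∃ S : Set V, IsStableSet G S ∧ S.ncard = k})
      ⟨0, ∅, Set.pairwise_empty _, Set.ncard_empty _⟩ bddAbove_stableSetCards
  exact ⟨S, hS, hcard⟩

lemma IsStableSet.anti (hGH : G ≤ H) (hS : IsStableSet H S) : IsStableSet G S :=
  fun _ hu _ hv hne hadj => hS hu hv hne (hGH hadj)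

lemma stabNum_anti [Finite V] (hGH : G ≤ H) : stabNum H ≤ stabNum G :=
  stabNum_le fun _ hS => (hS.anti hGH).ncard_le_stabNum

lemma IsStableSet.sup_edge {x y : V} (hS : IsStableSet G S) (hx : x ∉ S) :
    IsStableSet (G ⊔ fromEdgeSet {s(x, y)}) S := by
  intro u hu v hv hne hadj
  rcases (sup_adj _ _ _ _).mp hadj with h | h
  · exact hS hu hv hne h
  · obtain ⟨rfl, rfl⟩ | ⟨rfl, rfl⟩ := Sym2.eq_iff.mp ((fromEdgeSet_adj _).mp h).1
    exacts [hx hu, hx hv]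

lemma IsStableSet.ncard_inter_le_stabNum_induce [Finite V] (hS : IsStableSet G S) (P : Set V) :
    (S ∩ P).ncard ≤ stabNum (G.induce P) := by
  have hstable : IsStableSet (G.induce P) (Subtype.val ⁻¹' S) :=
    fun _ hu _ hv hne => hS hu hv (Subtype.val_injective.ne hne)
  calc (S ∩ P).ncard = (Subtype.val ⁻¹' S : Set P).ncard := by
        rw [← Set.ncard_image_of_injective _ Subtype.val_injective, Subtype.image_preimage_coe,
          Set.inter_comm]
    _ ≤ stabNum (G.induce P) := hstable.ncard_le_stabNum

def stableCore (G : SimpleGraph V) : Set V :=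
  {v | ∀ S, IsMaxStableSet G S → v ∈ S}

lemma AlphaPlusStable.ncard_stableCore_le_one [Finite V] (hG : AlphaPlusStable G) :
    (stableCore G).ncard ≤ 1 := by
  refine (Set.ncard_le_one).mpr fun x hx y hy => ?_
  by_contra hxy
  obtain ⟨S₀, hS₀⟩ := exists_isMaxStableSet G
  have hnadj : ¬ G.Adj x y := hS₀.1 (hx S₀ hS₀) (hy S₀ hS₀) hxy
  obtain ⟨S, hS, hcard⟩ := exists_isMaxStableSet (G ⊔ fromEdgeSet {s(x, y)})
  have hSmax : IsMaxStableSet G S := ⟨hS.anti le_sup_left, hcard.trans (hG x y hxy hnadj)⟩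
  exact hS (hx S hSmax) (hy S hSmax) hxy
    ((sup_adj _ _ _ _).mpr (Or.inr ((fromEdgeSet_adj _).mpr ⟨rfl, hxy⟩)))

end

lemma ncard_inter_inter_add_ncard_union_inter {V : Type*} [Finite V] (S T C : Set V) :
    (S ∩ T ∩ C).ncard + ((S ∪ T) ∩ C).ncard = (S ∩ C).ncard + (T ∩ C).ncard := by
  rw [Set.inter_inter_distrib_right, Set.union_inter_distrib_right]
  exact Set.ncard_inter_add_ncard_union _ _

namespace IsBipartition

variable {V : Type*} {G : SimpleGraph V} {A B S T : Set V}

lemma symm (hbip : IsBipartition G A B) : IsBipartition G B A :=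
  ⟨hbip.1.symm, by rw [Set.union_comm, hbip.2.1], fun _ _ h => (hbip.2.2 h).symm⟩

lemma mem_right_of_adj (hbip : IsBipartition G A B) {x y : V} (hx : x ∈ A) (hxy : G.Adj x y) :
    y ∈ B :=
  (hbip.2.2 hxy).elim And.right fun h => absurd h.1 (Set.disjoint_left.mp hbip.1 hx)

lemma isStableSet_left (hbip : IsBipartition G A B) : IsStableSet G A :=
  fun _ hx _ hy _ hxy => Set.disjoint_left.mp hbip.1 hy (hbip.mem_right_of_adj hx hxy)

lemma isStableSet_right (hbip : IsBipartition G A B) : IsStableSet G B :=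
  hbip.symm.isStableSet_left

lemma ncard_inter_add_ncard_inter [Finite V] (hbip : IsBipartition G A B) (S : Set V) :
    (S ∩ A).ncard + (S ∩ B).ncard = S.ncard := by
  rw [← Set.ncard_union_eq (hbip.1.mono Set.inter_subset_right Set.inter_subset_right),
    ← Set.inter_union_distrib_left, hbip.2.1, Set.inter_univ]

lemma ncard_add_ncard [Finite V] (hbip : IsBipartition G A B) :
    A.ncard + B.ncard = Nat.card V := by
  simpa using hbip.ncard_inter_add_ncard_inter Set.univ

lemma alphaPlusStable (hbip : IsBipartition G A B) [Finite V] (hA : stabNum G ≤ A.ncard)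
    (hB : stabNum G ≤ B.ncard) : AlphaPlusStable G := by
  intro x y _ _
  refine le_antisymm (stabNum_anti le_sup_left) ?_
  by_cases hx : x ∈ A
  · exact hB.trans
      (hbip.isStableSet_right.sup_edge (Set.disjoint_left.mp hbip.1 hx)).ncard_le_stabNum
  · exact hA.trans (hbip.isStableSet_left.sup_edge hx).ncard_le_stabNum

/-- König–Hall: if no stable set beats `B`, then `A` is matched into `B`, since for `X ⊆ A` the set
`X ∪ (B \ N(X))` is stable. -/
lemma exists_injective_adj_of_stabNum_le [Finite V] (hbip : IsBipartition G A B)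
    (hα : stabNum G ≤ B.ncard) : ∃ f : A → V, Function.Injective f ∧ ∀ a : A, G.Adj a (f a) := by
  classical
  have := Fintype.ofFinite V
  let nbrs : A → Finset V := fun a => (G.neighborSet a).toFinset
  have hall : ∀ s : Finset A, s.card ≤ (s.biUnion nbrs).card := by
    intro s
    set N : Set V := ↑(s.biUnion nbrs)
    have hN : ∀ v, v ∈ N ↔ ∃ a ∈ s, G.Adj a v := by
      simp only [N, nbrs, Finset.coe_biUnion, Set.mem_iUnion₂, Finset.mem_coe, Set.coe_toFinset,
        mem_neighborSet, exists_prop, implies_true]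
    have hNB : N ⊆ B := fun v hv =>
      let ⟨a, _, hav⟩ := (hN v).mp hv
      hbip.mem_right_of_adj a.2 hav
    have hstable : IsStableSet G (Subtype.val '' (s : Set A) ∪ B \ N) := by
      rintro u (⟨a, ha, rfl⟩ | ⟨huB, huN⟩) v (⟨b, hb, rfl⟩ | ⟨hvB, hvN⟩) hne hadj
      · exact hbip.isStableSet_left a.2 b.2 hne hadj
      · exact hvN ((hN v).mpr ⟨a, ha, hadj⟩)
      · exact huN ((hN u).mpr ⟨b, hb, hadj.symm⟩)
      · exact hbip.isStableSet_right huB hvB hne hadj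
    have hdisj : Disjoint (Subtype.val '' (s : Set A)) (B \ N) :=
      hbip.1.mono (by rintro _ ⟨a, -, rfl⟩; exact a.2) Set.sdiff_subset
    have hcard := hstable.ncard_le_stabNum
    rw [Set.ncard_union_eq hdisj,
      Set.ncard_image_of_injective _ Subtype.val_injective, Set.ncard_coe_finset,
      Set.ncard_sdiff hNB, Set.ncard_coe_finset] at hcard
    have := Set.ncard_le_ncard hNB
    rw [Set.ncard_coe_finset] at this
    omega
  obtain ⟨f, hf, hadj⟩ := (Finset.all_card_le_biUnion_card_iff_exists_injective nbrs).mp hall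
  exact ⟨f, hf, fun a => by simpa [nbrs] using hadj a⟩

lemma isStableSet_inter_union (hbip : IsBipartition G A B) (hS : IsStableSet G S)
    (hT : IsStableSet G T) : IsStableSet G (S ∩ T ∩ A ∪ (S ∪ T) ∩ B) := by
  have key : ∀ u ∈ S ∩ T, ∀ v ∈ S ∪ T, u ≠ v → ¬ G.Adj u v := by
    rintro u ⟨huS, huT⟩ v (hvS | hvT) hne
    exacts [hS huS hvS hne, hT huT hvT hne]
  rintro u (⟨hu, huA⟩ | ⟨hu, huB⟩) v (⟨hv, hvA⟩ | ⟨hv, hvB⟩) hne hadj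
  · exact hbip.isStableSet_left huA hvA hne hadj
  · exact key u hu v hv hne hadj
  · exact key v hv u hu hne.symm hadj.symm
  · exact hbip.isStableSet_right huB hvB hne hadj

/-- The `A`-parts of maximum stable sets are closed under intersection: the two stable sets
`(S ∩ T ∩ A) ∪ ((S ∪ T) ∩ B)` and `((S ∪ T) ∩ A) ∪ (S ∩ T ∩ B)` have total size `|S| + |T|`. -/
lemma isMaxStableSet_inter_union [Finite V] (hbip : IsBipartition G A B)
    (hS : IsMaxStableSet G S) (hT : IsMaxStableSet G T) :
    IsMaxStableSet G (S ∩ T ∩ A ∪ (S ∪ T) ∩ B) := by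
  have hstable := hbip.isStableSet_inter_union hS.1 hT.1
  have hle := hstable.ncard_le_stabNum
  have hle' := (hbip.symm.isStableSet_inter_union hS.1 hT.1).ncard_le_stabNum
  refine ⟨hstable, le_antisymm hle ?_⟩
  rw [Set.ncard_union_eq (hbip.1.mono Set.inter_subset_right Set.inter_subset_right)] at hle ⊢
  rw [Set.ncard_union_eq (hbip.1.symm.mono Set.inter_subset_right Set.inter_subset_right)] at hle'
  have hA := ncard_inter_inter_add_ncard_union_inter S T A
  have hB := ncard_inter_inter_add_ncard_union_inter S T B
  have hSsplit := hbip.ncard_inter_add_ncard_inter S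
  have hTsplit := hbip.ncard_inter_add_ncard_inter T
  linarith [hS.2, hT.2]

lemma exists_isMaxStableSet_inter_subset_stableCore [Finite V] (hbip : IsBipartition G A B) :
    ∃ S₀, IsMaxStableSet G S₀ ∧ S₀ ∩ A ⊆ stableCore G := by
  obtain ⟨S₀, hS₀, hmin⟩ := Set.exists_min_image {S | IsMaxStableSet G S} (fun S => (S ∩ A).ncard)
    (Set.toFinite _) (exists_isMaxStableSet G)
  refine ⟨S₀, hS₀, fun x hx S hS => ?_⟩
  have hle := hmin _ (hbip.isMaxStableSet_inter_union hS₀ hS)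
  have hA : (S₀ ∩ S ∩ A ∪ (S₀ ∪ S) ∩ B) ∩ A = S₀ ∩ S ∩ A := by
    ext v
    have : v ∈ A → v ∉ B := fun h => Set.disjoint_left.mp hbip.1 h
    simp only [Set.mem_inter_iff, Set.mem_union]
    tauto
  rw [hA, Set.inter_right_comm] at hle
  have heq := Set.eq_of_subset_of_ncard_le Set.inter_subset_left hle
  exact (heq ▸ hx).2

/-- If some stable set beats `B`, then a maximum stable set `S₀` with minimal `S₀ ∩ A` has at least
two vertices in `A`: a single vertex `x` would force `B ⊆ S₀`, isolating `x`. -/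
lemma one_lt_ncard_stableCore [Finite V] (hbip : IsBipartition G A B) (hconn : G.Connected)
    (hB : B.Nonempty) (hlt : B.ncard < stabNum G) : 1 < (stableCore G).ncard := by
  obtain ⟨S₀, hS₀, hcore⟩ := hbip.exists_isMaxStableSet_inter_subset_stableCore
  refine lt_of_lt_of_le ?_ (Set.ncard_le_ncard hcore)
  by_contra! hle
  have hsplit := hbip.ncard_inter_add_ncard_inter S₀
  have hSB : (S₀ ∩ B).ncard ≤ B.ncard := Set.ncard_le_ncard Set.inter_subset_right
  obtain ⟨x, hx⟩ := Set.ncard_eq_one.mp (show (S₀ ∩ A).ncard = 1 by linarith [hS₀.2])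
  have hxS₀ : x ∈ S₀ ∩ A := hx ▸ rfl
  have hBS₀ : B ⊆ S₀ := Set.inter_eq_right.mp
    (Set.eq_of_subset_of_ncard_le Set.inter_subset_right (by linarith [hS₀.2]))
  obtain ⟨b, hb⟩ := hB
  have : Nontrivial V := ⟨x, b, fun h => Set.disjoint_left.mp hbip.1 hxS₀.2 (h ▸ hb)⟩
  obtain ⟨y, hxy⟩ := hconn.preconnected.exists_adj_of_nontrivial x
  exact hS₀.1 hxS₀.1 (hBS₀ (hbip.mem_right_of_adj hxS₀.2 hxy)) hxy.ne hxy

end IsBipartition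

section Bistable

variable {W : Type*} {H : SimpleGraph W}

lemma BistableBipartite.two_mul_stabNum [Finite W] {A B : Set W} (h : BistableBipartite H A B) :
    2 * stabNum H = Nat.card W := by
  rw [← h.1.ncard_add_ncard, ((h.2 A).mpr (Or.inl rfl)).2, ((h.2 B).mpr (Or.inr rfl)).2, two_mul]

lemma bistableBipartite_pair {a b : W} (hab : H.Adj a b) (hcover : ∀ x, x = a ∨ x = b) :
    BistableBipartite H {a} {b} := by
  have : Finite W := Finite.of_surjective (fun i : Bool => if i then a else b) fun x =>
    (hcover x).elim (fun h => ⟨true, h.symm⟩) fun h => ⟨false, h.symm⟩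
  have hsub : ∀ S, IsStableSet H S → S.Subsingleton := by
    intro S hS u hu v hv
    by_contra hne
    refine hS hu hv hne ?_
    rcases hcover u with rfl | rfl <;> rcases hcover v with rfl | rfl
    exacts [absurd rfl hne, hab, hab.symm, absurd rfl hne]
  have hstab : stabNum H = 1 :=
    le_antisymm (stabNum_le fun S hS => Set.ncard_le_one_iff_subsingleton.mpr (hsub S hS))
      ((Set.ncard_singleton a).symm.trans_le
        (IsStableSet.ncard_le_stabNum (Set.pairwise_singleton _ _)))
  refine ⟨⟨Set.disjoint_singleton.mpr hab.ne, ?_, ?_⟩, fun S => ⟨fun ⟨_, hcard⟩ => ?_, ?_⟩⟩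
  · ext x
    rcases hcover x with rfl | rfl <;> simp
  · intro x y hxy
    rcases hcover x with rfl | rfl <;> rcases hcover y with rfl | rfl
    exacts [absurd hxy (H.irrefl), Or.inl ⟨rfl, rfl⟩, Or.inr ⟨rfl, rfl⟩, absurd hxy (H.irrefl)]
  · obtain ⟨x, rfl⟩ := Set.ncard_eq_one.mp (hcard.trans hstab)
    rcases hcover x with rfl | rfl
    exacts [Or.inl rfl, Or.inr rfl]
  · rintro (rfl | rfl) <;> exact ⟨Set.pairwise_singleton _ _, by rw [hstab, Set.ncard_singleton]⟩

end Bistable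

def IsBistableDecomposition {V ι : Type*} (G : SimpleGraph V) (P : ι → Set V) : Prop :=
  (∀ i j, i ≠ j → Disjoint (P i) (P j)) ∧ (⋃ i, P i) = Set.univ ∧
    ∀ i, ∃ Ai Bi : Set (P i), BistableBipartite (G.induce (P i)) Ai Bi

namespace IsBistableDecomposition

variable {V ι κ : Type*} {G : SimpleGraph V} {P : ι → Set V}

lemma comp_equiv (hP : IsBistableDecomposition G P) (e : κ ≃ ι) :
    IsBistableDecomposition G (P ∘ e) :=
  ⟨fun i j hij => hP.1 (e i) (e j) (e.injective.ne hij), by rw [← hP.2.1]; exact e.iSup_comp,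
    fun i => hP.2.2 (e i)⟩

lemma ncard_eq_sum_ncard_inter [Finite V] [Fintype ι] (hP : IsBistableDecomposition G P)
    (S : Set V) : S.ncard = ∑ i, (S ∩ P i).ncard := by
  have hdisj : Pairwise fun i j => Disjoint (S ∩ P i) (S ∩ P j) := fun i j hij =>
    (hP.1 i j hij).mono Set.inter_subset_right Set.inter_subset_right
  rw [← finsum_eq_sum_of_fintype, ← Set.ncard_iUnion_of_finite (fun _ => Set.toFinite _) hdisj,
    ← Set.inter_iUnion, hP.2.1, Set.inter_univ]

lemma two_mul_stabNum_le [Finite V] [Fintype ι] (hP : IsBistableDecomposition G P) :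
    2 * stabNum G ≤ Nat.card V := by
  have hpart : ∀ i, 2 * stabNum (G.induce (P i)) = (P i).ncard := fun i =>
    let ⟨_, _, hi⟩ := hP.2.2 i
    hi.two_mul_stabNum.trans (Nat.card_coe_set_eq _)
  obtain ⟨S, hS, hcard⟩ := exists_isMaxStableSet G
  calc 2 * stabNum G = 2 * ∑ i, (S ∩ P i).ncard := by rw [← hcard, ← hP.ncard_eq_sum_ncard_inter]
    _ ≤ ∑ i, 2 * stabNum (G.induce (P i)) := by
      rw [Finset.mul_sum]
      gcongr with i
      exact hS.ncard_inter_le_stabNum_induce (P i)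
    _ = ∑ i, (P i).ncard := Finset.sum_congr rfl fun i _ => hpart i
    _ = Nat.card V := by simpa using (hP.ncard_eq_sum_ncard_inter Set.univ).symm

end IsBistableDecomposition

lemma IsBipartition.isBistableDecomposition_of_injective {V : Type*} [Finite V]
    {G : SimpleGraph V} {A B : Set V} (hbip : IsBipartition G A B) (hbal : A.ncard = B.ncard)
    {f : A → V} (hf : Function.Injective f) (hadj : ∀ a : A, G.Adj a (f a)) :
    IsBistableDecomposition G fun a : A => ({(a : V), f a} : Set V) := by
  have hA : ∀ a : A, (a : V) ∉ B := fun a => Set.disjoint_left.mp hbip.1 a.2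
  have hfB : ∀ a, f a ∈ B := fun a => hbip.mem_right_of_adj a.2 (hadj a)
  have hrange : Set.range f = B :=
    Set.eq_of_subset_of_ncard_le (Set.range_subset_iff.mpr hfB)
      (by rw [Set.ncard_range_of_injective hf, Nat.card_coe_set_eq, hbal])
  refine ⟨fun a a' hne => ?_, Set.eq_univ_of_forall fun v => ?_, fun a => ?_⟩
  · rw [Set.disjoint_left]
    rintro v (rfl | rfl) (h | h)
    · exact hne (Subtype.val_injective h)
    · exact hA a (h ▸ hfB a')
    · exact hA a' (h ▸ hfB a)
    · exact hne (hf h)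
  · rcases (hbip.2.1 ▸ Set.mem_univ v : v ∈ A ∪ B) with hv | hv
    · exact Set.mem_iUnion.mpr ⟨⟨v, hv⟩, Or.inl rfl⟩
    · obtain ⟨a, rfl⟩ := hrange ▸ hv
      exact Set.mem_iUnion.mpr ⟨a, Or.inr rfl⟩
  · have hadj' : (G.induce {(a : V), f a}).Adj ⟨a, Or.inl rfl⟩ ⟨f a, Or.inr rfl⟩ := hadj a
    refine ⟨_, _, bistableBipartite_pair hadj' ?_⟩
    rintro ⟨v, rfl | rfl⟩
    exacts [Or.inl rfl, Or.inr rfl]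

/-- A connected balanced bipartite graph `G` is α⁺-stable iff its vertex
set can be partitioned into parts `P 1, …, P k` such that each induced subgraph `G[P i]`
is bistable bipartite. -/
theorem stmt_3 {V : Type*} [Fintype V] (G : SimpleGraph V) (A B : Set V)
    (hbip : IsBipartition G A B) (hbal : A.ncard = B.ncard) (hconn : G.Connected) :
    AlphaPlusStable G ↔
      ∃ k : ℕ, 1 ≤ k ∧ ∃ P : Fin k → Set V,
        (∀ i j, i ≠ j → Disjoint (P i) (P j)) ∧ (⋃ i, P i) = Set.univ ∧
        ∀ i, ∃ Ai Bi : Set (P i), BistableBipartite (G.induce (P i)) Ai Bi := by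
  have hsize := hbip.ncard_add_ncard
  have hA_le := hbip.isStableSet_left.ncard_le_stabNum
  have hB_le := hbip.isStableSet_right.ncard_le_stabNum
  constructor
  · intro hG
    have := hconn.nonempty
    have hpos : 0 < Nat.card V := Nat.card_pos
    have hA : A.Nonempty := Set.nonempty_of_ncard_ne_zero (by omega)
    have hB : B.Nonempty := Set.nonempty_of_ncard_ne_zero (by omega)
    have hα : stabNum G ≤ B.ncard := by
      by_contra! hlt
      exact (hbip.one_lt_ncard_stableCore hconn hB hlt).not_ge hG.ncard_stableCore_le_one
    obtain ⟨f, hf, hadj⟩ := hbip.exists_injective_adj_of_stabNum_le hα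
    have : Nonempty A := hA.to_subtype
    exact ⟨Nat.card A, Nat.card_pos, _,
      (hbip.isBistableDecomposition_of_injective hbal hf hadj).comp_equiv (Finite.equivFin A).symm⟩
  · rintro ⟨k, -, P, hP⟩
    have := IsBistableDecomposition.two_mul_stabNum_le (G := G) hP
    exact hbip.alphaPlusStable (by omega) (by omega)
end

section
/- A balanced bipartite graph is bistable bipartite if and only if its reduced adjacency matrix is fully indecomposable. -/
open SimpleGraph

section Aux
variable {n : ℕ} (X : Matrix (Fin n) (Fin n) ℕ)

lemma mg_adj_lr (i j : Fin n) : (matGraph X).Adj (Sum.inl i) (Sum.inr j) ↔ X i j = 1 := by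
  simp [matGraph]

lemma mg_not_ll (i j : Fin n) : ¬ (matGraph X).Adj (Sum.inl i) (Sum.inl j) := by
  simp [matGraph]

lemma mg_not_rr (i j : Fin n) : ¬ (matGraph X).Adj (Sum.inr i) (Sum.inr j) := by
  simp [matGraph]

variable {X}

lemma mg_stable_iff (h01 : ZeroOne X) (S : Set (Fin n ⊕ Fin n)) :
    IsStableSet (matGraph X) S ↔
      ∀ i j : Fin n, Sum.inl i ∈ S → Sum.inr j ∈ S → X i j = 0 := by
  constructor
  · intro h i j hi hj
    rcases h01 i j with h0 | h1
    · exact h0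
    · exact absurd ((mg_adj_lr X i j).mpr h1) (h hi hj (by simp))
  · intro h
    rintro (i | i) hi (j | j) hj hne hadj
    · exact mg_not_ll X i j hadj
    · exact absurd (h i j hi hj) (by rw [mg_adj_lr] at hadj; omega)
    · exact absurd (h j i hj hi) (by have := (mg_adj_lr X j i).mp hadj.symm; omega)
    · exact mg_not_rr X i j hadj

lemma ncard_decomp (S : Set (Fin n ⊕ Fin n)) :
    S.ncard = (Sum.inl ⁻¹' S).ncard + (Sum.inr ⁻¹' S).ncard := by
  conv_lhs => rw [← Set.image_preimage_inl_union_image_preimage_inr S]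
  rw [Set.ncard_union_eq ?_ (Set.toFinite _) (Set.toFinite _),
    Set.ncard_image_of_injective _ Sum.inl_injective,
    Set.ncard_image_of_injective _ Sum.inr_injective]
  rw [Set.disjoint_left]
  rintro x ⟨a, -, rfl⟩ ⟨b, -, h⟩
  exact Sum.inl_ne_inr h.symm

lemma stab_bdd {V : Type*} [Finite V] (G : SimpleGraph V) :
    BddAbove {k | ∃ S : Set V, IsStableSet G S ∧ S.ncard = k} := by
  refine ⟨Nat.card V, ?_⟩
  rintro k ⟨S, -, rfl⟩
  exact (Set.ncard_le_ncard (Set.subset_univ S) Set.finite_univ).trans (Set.ncard_univ V).le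

lemma le_stab {V : Type*} [Finite V] {G : SimpleGraph V} {S : Set V}
    (h : IsStableSet G S) : S.ncard ≤ stabNum G :=
  le_csSup (stab_bdd G) ⟨S, h, rfl⟩

lemma stab_le {V : Type*} {G : SimpleGraph V} {m : ℕ}
    (h : ∀ S : Set V, IsStableSet G S → S.ncard ≤ m) : stabNum G ≤ m := by
  refine csSup_le ⟨0, ∅, ?_, Set.ncard_empty _⟩ ?_
  · exact Set.pairwise_empty _
  · rintro k ⟨S, hS, rfl⟩; exact h S hS

lemma stable_A (h01 : ZeroOne X) :
    IsStableSet (matGraph X) (Set.range Sum.inl : Set (Fin n ⊕ Fin n)) := by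
  rw [mg_stable_iff h01]
  rintro i j - ⟨k, hk⟩
  exact absurd hk (by simp)

lemma stable_B (h01 : ZeroOne X) :
    IsStableSet (matGraph X) (Set.range Sum.inr : Set (Fin n ⊕ Fin n)) := by
  rw [mg_stable_iff h01]
  rintro i j ⟨k, hk⟩ -
  exact absurd hk (by simp)

lemma ncard_A : (Set.range Sum.inl : Set (Fin n ⊕ Fin n)).ncard = n := by
  rw [ncard_decomp]
  simp [Set.ncard_univ, Nat.card_eq_fintype_card]

lemma ncard_B : (Set.range Sum.inr : Set (Fin n ⊕ Fin n)).ncard = n := by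
  rw [ncard_decomp]
  simp [Set.ncard_univ, Nat.card_eq_fintype_card]

lemma stable_block (h01 : ZeroOne X) (R C : Finset (Fin n))
    (hz : ∀ i ∈ R, ∀ j ∈ C, X i j = 0) :
    IsStableSet (matGraph X) (Sum.inl '' ↑R ∪ Sum.inr '' ↑C) := by
  rw [mg_stable_iff h01]
  intro i j hi hj
  apply hz <;> [skip; skip] <;> simp at hi hj ⊢
  · exact hi
  · exact hj

lemma ncard_block (R C : Finset (Fin n)) :
    (Sum.inl '' ↑R ∪ Sum.inr '' ↑C : Set (Fin n ⊕ Fin n)).ncard = R.card + C.card := by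
  rw [ncard_decomp]
  congr 1 <;> simp only [Set.preimage_union]
  · rw [Set.preimage_image_eq _ Sum.inl_injective]
    simp [Set.ncard_coe_finset]
  · rw [Set.preimage_image_eq _ Sum.inr_injective]
    simp [Set.ncard_coe_finset]

end Aux

/-- A balanced bipartite graph is bistable bipartite iff its reduced
adjacency matrix is fully indecomposable. -/
theorem stmt_7 {n : ℕ} (X : Matrix (Fin n) (Fin n) ℕ) (h01 : ZeroOne X) :
    BistableBipartite (matGraph X)
        (Set.range Sum.inl : Set (Fin n ⊕ Fin n)) (Set.range Sum.inr) ↔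
      FullyIndecomposable X := by
  have hbip : IsBipartition (matGraph X) (Set.range Sum.inl) (Set.range Sum.inr) := by
    refine ⟨Set.isCompl_range_inl_range_inr.disjoint, Set.range_inl_union_range_inr, ?_⟩
    rintro (i | i) (j | j) hadj
    · exact absurd hadj (mg_not_ll X i j)
    · exact Or.inl ⟨⟨i, rfl⟩, ⟨j, rfl⟩⟩
    · exact Or.inr ⟨⟨i, rfl⟩, ⟨j, rfl⟩⟩
    · exact absurd hadj (mg_not_rr X i j)
  constructor
  · rintro ⟨-, hmax⟩ hpd
    have hA : IsMaxStableSet (matGraph X) (Set.range Sum.inl) := (hmax _).mpr (Or.inl rfl)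
    have hstab : stabNum (matGraph X) = n := by rw [← hA.2, ncard_A]
    rcases hpd with ⟨hcard, hzero⟩ | ⟨R, C, hR, hC, hsum, hz⟩
    · have h1 : n = 1 := by simpa using hcard
      have hu : IsStableSet (matGraph X) (Set.univ : Set (Fin n ⊕ Fin n)) := by
        rw [mg_stable_iff h01]; intro i j _ _; exact hzero i j
      have hle := le_stab hu
      rw [hstab, Set.ncard_univ, Nat.card_sum, Nat.card_eq_fintype_card,
        Fintype.card_fin] at hle
      omega
    · have hstable := stable_block h01 R C hz
      have hcardS : (Sum.inl '' ↑R ∪ Sum.inr '' ↑C : Set (Fin n ⊕ Fin n)).ncard = n := by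
        rw [ncard_block, hsum, Fintype.card_fin]
      have hmaxS : IsMaxStableSet (matGraph X) (Sum.inl '' ↑R ∪ Sum.inr '' ↑C) :=
        ⟨hstable, by rw [hcardS, hstab]⟩
      rcases (hmax _).mp hmaxS with h | h
      · obtain ⟨j, hj⟩ := hC
        have hmem : (Sum.inr j : Fin n ⊕ Fin n) ∈ Sum.inl '' ↑R ∪ Sum.inr '' ↑C :=
          Or.inr ⟨j, hj, rfl⟩
        rw [h] at hmem
        obtain ⟨k, hk⟩ := hmem
        exact Sum.inl_ne_inr hk
      · obtain ⟨i, hi⟩ := hR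
        have hmem : (Sum.inl i : Fin n ⊕ Fin n) ∈ Sum.inl '' ↑R ∪ Sum.inr '' ↑C :=
          Or.inl ⟨i, hi, rfl⟩
        rw [h] at hmem
        obtain ⟨k, hk⟩ := hmem
        exact Sum.inr_ne_inl hk
  · intro hfi
    have hbound : ∀ S : Set (Fin n ⊕ Fin n), IsStableSet (matGraph X) S → S.ncard ≤ n := by
      intro S hS
      by_contra hgt
      push_neg at hgt
      obtain ⟨R, hRmem, hRcard⟩ : ∃ R : Finset (Fin n),
          (∀ i, i ∈ R ↔ Sum.inl i ∈ S) ∧ R.card = (Sum.inl ⁻¹' S).ncard :=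
        ⟨(Set.toFinite (Sum.inl ⁻¹' S)).toFinset,
          fun i => (Set.toFinite _).mem_toFinset,
          (Set.ncard_eq_toFinset_card _ _).symm⟩
      obtain ⟨C, hCmem, hCcard⟩ : ∃ C : Finset (Fin n),
          (∀ j, j ∈ C ↔ Sum.inr j ∈ S) ∧ C.card = (Sum.inr ⁻¹' S).ncard :=
        ⟨(Set.toFinite (Sum.inr ⁻¹' S)).toFinset,
          fun j => (Set.toFinite _).mem_toFinset,
          (Set.ncard_eq_toFinset_card _ _).symm⟩
      have hz : ∀ i ∈ R, ∀ j ∈ C, X i j = 0 := fun i hi j hj =>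
        (mg_stable_iff h01 S).mp hS i j ((hRmem i).mp hi) ((hCmem j).mp hj)
      have hcards : R.card + C.card = S.ncard := by
        rw [hRcard, hCcard, ← ncard_decomp]
      have hRn : R.card ≤ n := by simpa using R.card_le_univ
      have hCn : C.card ≤ n := by simpa using C.card_le_univ
      apply hfi
      by_cases hn0 : n = 0
      · omega
      by_cases hn1 : n = 1
      · left
        refine ⟨by rw [Fintype.card_fin, hn1], fun i j => ?_⟩
        have hRne : R.Nonempty := Finset.card_pos.mp (by omega)
        have hCne : C.Nonempty := Finset.card_pos.mp (by omega)
        obtain ⟨i0, hi0⟩ := hRne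
        obtain ⟨j0, hj0⟩ := hCne
        have hii : i = i0 := Fin.ext (by have := i.isLt; have := i0.isLt; omega)
        have hjj : j = j0 := Fin.ext (by have := j.isLt; have := j0.isLt; omega)
        rw [hii, hjj]
        exact hz i0 hi0 j0 hj0
      right
      obtain ⟨R', hR'sub, hR'card⟩ :=
        Finset.exists_subset_card_eq (show min R.card (n - 1) ≤ R.card from min_le_left _ _)
      obtain ⟨C', hC'sub, hC'card⟩ :=
        Finset.exists_subset_card_eq (show n - min R.card (n - 1) ≤ C.card by omega)
      refine ⟨R', C', Finset.card_pos.mp (by omega), Finset.card_pos.mp (by omega),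
        by rw [Fintype.card_fin]; omega,
        fun i hi j hj => hz i (hR'sub hi) j (hC'sub hj)⟩
    have hstab : stabNum (matGraph X) = n := by
      refine le_antisymm (stab_le hbound) ?_
      have := le_stab (stable_A h01)
      rwa [ncard_A] at this
    refine ⟨hbip, fun S => ⟨?_, ?_⟩⟩
    · rintro ⟨hS, hcardS⟩
      rw [hstab] at hcardS
      obtain ⟨R, hRmem, hRcard⟩ : ∃ R : Finset (Fin n),
          (∀ i, i ∈ R ↔ Sum.inl i ∈ S) ∧ R.card = (Sum.inl ⁻¹' S).ncard :=
        ⟨(Set.toFinite (Sum.inl ⁻¹' S)).toFinset,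
          fun i => (Set.toFinite _).mem_toFinset,
          (Set.ncard_eq_toFinset_card _ _).symm⟩
      obtain ⟨C, hCmem, hCcard⟩ : ∃ C : Finset (Fin n),
          (∀ j, j ∈ C ↔ Sum.inr j ∈ S) ∧ C.card = (Sum.inr ⁻¹' S).ncard :=
        ⟨(Set.toFinite (Sum.inr ⁻¹' S)).toFinset,
          fun j => (Set.toFinite _).mem_toFinset,
          (Set.ncard_eq_toFinset_card _ _).symm⟩
      have hz : ∀ i ∈ R, ∀ j ∈ C, X i j = 0 := fun i hi j hj =>
        (mg_stable_iff h01 S).mp hS i j ((hRmem i).mp hi) ((hCmem j).mp hj)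
      have hcards : R.card + C.card = n := by
        rw [hRcard, hCcard, ← ncard_decomp, hcardS]
      rcases eq_or_ne R ∅ with hRe | hRe
      · right
        have hsub : S ⊆ Set.range Sum.inr := by
          rintro (i | i) hx
          · exact absurd ((hRmem i).mpr hx) (by simp [hRe])
          · exact ⟨i, rfl⟩
        exact Set.eq_of_subset_of_ncard_le hsub (by rw [ncard_B, hcardS]) (Set.toFinite _)
      rcases eq_or_ne C ∅ with hCe | hCe
      · left
        have hsub : S ⊆ Set.range Sum.inl := by
          rintro (i | i) hx
          · exact ⟨i, rfl⟩
          · exact absurd ((hCmem i).mpr hx) (by simp [hCe])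
        exact Set.eq_of_subset_of_ncard_le hsub (by rw [ncard_A, hcardS]) (Set.toFinite _)
      exact absurd (Or.inr ⟨R, C, Finset.nonempty_of_ne_empty hRe,
        Finset.nonempty_of_ne_empty hCe, by rw [Fintype.card_fin]; exact hcards, hz⟩) hfi
    · rintro (rfl | rfl)
      · exact ⟨stable_A h01, by rw [ncard_A, hstab]⟩
      · exact ⟨stable_B h01, by rw [ncard_B, hstab]⟩
end

section
/- A (0,1)-matrix X of order n ≥ 2 is fully indecomposable if and only if every entry of X equal to 1 belongs to a nonzero diagonal of X and every entry of X equal to 0 belongs to a diagonal of X all of whose other elements equal 1. -/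
open SimpleGraph

/-! Frobenius–König via Hall: `X` has no `k × (n - k)` zero block iff for every position
`(i, j)` the matrix with row `i` and column `j` deleted satisfies Hall's condition, i.e. some
diagonal through `(i, j)` is nonzero away from `(i, j)`. A Hall violator `R` with too few
nonzero columns yields the zero block; conversely, a diagonal through `(i, j)` with `i ∉ R`,
`j ∉ C` would have to send the rows of a zero block `R × C` into the `n - |C| - 1 = |R| - 1`
columns outside `C ∪ {j}`. For a (0,1)-matrix, the diagonals through the `1`s and `0`s asked
for are exactly these. -/

open Finset

section

variable {m : Type*}

lemma exists_perm_extend_of_injective [Fintype m] [DecidableEq m] {i j : m}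
    (f : {k // k ≠ i} → m) (hf : Function.Injective f) (hfj : ∀ k, f k ≠ j) :
    ∃ σ : Equiv.Perm m, σ i = j ∧ ∀ k : {k // k ≠ i}, σ k = f k := by
  set g : m → m := fun k => if hk : k = i then j else f ⟨k, hk⟩ with hg
  have hg_inj : Function.Injective g := by
    intro a b hab
    by_cases ha : a = i <;> by_cases hb : b = i <;>
      simp only [hg, ha, hb, dite_true, dite_false] at hab
    · exact ha.trans hb.symm
    · exact absurd hab.symm (hfj _)
    · exact absurd hab (hfj _)
    · exact congrArg Subtype.val (hf hab)
  refine ⟨Equiv.ofBijective g (Finite.injective_iff_bijective.mp hg_inj), by simp [hg], ?_⟩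
  intro k
  simp [hg, k.2]

lemma hasZeroSubmatrix_of_card_le [Fintype m] [DecidableEq m] {X : Matrix m m ℕ}
    {R D : Finset m} (hR : R.Nonempty) (hRm : #R < Fintype.card m) (hD : #D ≤ #R)
    (hzero : ∀ r ∈ R, ∀ c ∉ D, X r c = 0) :
    HasZeroSubmatrix X := by
  have hDc : Fintype.card m - #R ≤ #Dᶜ := by rw [card_compl]; omega
  obtain ⟨C, hCD, hC⟩ := exists_subset_card_eq hDc
  refine ⟨R, C, hR, ?_, by omega, fun r hr c hc => hzero r hr c (mem_compl.mp (hCD hc))⟩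
  rw [← card_pos, hC]
  omega

lemma exists_perm_of_not_hasZeroSubmatrix [Fintype m] [DecidableEq m] {X : Matrix m m ℕ}
    (hX : ¬ HasZeroSubmatrix X) (i j : m) :
    ∃ σ : Equiv.Perm m, σ i = j ∧ ∀ k, k ≠ i → X k (σ k) ≠ 0 := by
  let t : {k // k ≠ i} → Finset m := fun k => (univ.filter fun c => X k c ≠ 0).erase j
  have hall : ∀ s : Finset {k // k ≠ i}, #s ≤ #(s.biUnion t) := by
    intro s
    by_contra! hlt
    apply hX
    refine hasZeroSubmatrix_of_card_le (R := s.map (Function.Embedding.subtype _))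
      (D := insert j (s.biUnion t)) ?_ ?_ ?_ ?_
    · rw [← card_pos, card_map]; omega
    · exact card_lt_univ_of_notMem (x := i) (by simp)
    · exact (card_insert_le _ _).trans (by rw [card_map]; omega)
    · intro r hr c hc
      obtain ⟨k, hks, rfl⟩ := mem_map.mp hr
      rw [mem_insert, not_or] at hc
      by_contra hne
      exact hc.2 (mem_biUnion.mpr ⟨k, hks, mem_erase.mpr ⟨hc.1, by simpa using hne⟩⟩)
  obtain ⟨f, hf_inj, hft⟩ := (all_card_le_biUnion_card_iff_exists_injective t).mp hall
  obtain ⟨σ, hσi, hσf⟩ :=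
    exists_perm_extend_of_injective f hf_inj fun k => (mem_erase.mp (hft k)).1
  refine ⟨σ, hσi, fun k hk => ?_⟩
  rw [hσf ⟨k, hk⟩]
  exact (mem_filter.mp (mem_erase.mp (hft ⟨k, hk⟩)).2).2

lemma not_hasZeroSubmatrix_of_forall_exists_perm [Fintype m] [DecidableEq m] {X : Matrix m m ℕ}
    (h : ∀ i j, ∃ σ : Equiv.Perm m, σ i = j ∧ ∀ k, k ≠ i → X k (σ k) ≠ 0) :
    ¬ HasZeroSubmatrix X := by
  rintro ⟨R, C, hR, hC, hcard, hzero⟩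
  obtain ⟨i, hi⟩ : Rᶜ.Nonempty := by rw [← card_pos, card_compl]; have := hC.card_pos; omega
  obtain ⟨j, hj⟩ : Cᶜ.Nonempty := by rw [← card_pos, card_compl]; have := hR.card_pos; omega
  obtain ⟨σ, rfl, hσ⟩ := h i j
  have hmaps : R.image σ ⊆ Cᶜ.erase (σ i) := by
    intro c hc
    obtain ⟨k, hk, rfl⟩ := mem_image.mp hc
    have hki : k ≠ i := by rintro rfl; exact mem_compl.mp hi hk
    exact mem_erase.mpr
      ⟨σ.injective.ne hki, mem_compl.mpr fun hkC => hσ k hki (hzero k hk _ hkC)⟩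
  have := card_le_card hmaps
  rw [card_image_of_injective _ σ.injective, card_erase_of_mem hj, card_compl] at this
  have := hR.card_pos
  omega

theorem not_hasZeroSubmatrix_iff [Fintype m] [DecidableEq m] {X : Matrix m m ℕ} :
    ¬ HasZeroSubmatrix X ↔ ∀ i j, ∃ σ : Equiv.Perm m, σ i = j ∧ ∀ k, k ≠ i → X k (σ k) ≠ 0 :=
  ⟨exists_perm_of_not_hasZeroSubmatrix, not_hasZeroSubmatrix_of_forall_exists_perm⟩

lemma fullyIndecomposable_iff_not_hasZeroSubmatrix [Fintype m] {X : Matrix m m ℕ}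
    (hm : Fintype.card m ≠ 1) : FullyIndecomposable X ↔ ¬ HasZeroSubmatrix X := by
  simp [FullyIndecomposable, PartlyDecomposable, hm]

lemma ZeroOne.forall_exists_perm_iff {X : Matrix m m ℕ} (h01 : ZeroOne X) :
    ((∀ i j, X i j = 1 → ∃ σ : Equiv.Perm m, σ i = j ∧ ∀ k, X k (σ k) ≠ 0) ∧
      (∀ i j, X i j = 0 → ∃ σ : Equiv.Perm m, σ i = j ∧ ∀ k, k ≠ i → X k (σ k) = 1)) ↔
      ∀ i j, ∃ σ : Equiv.Perm m, σ i = j ∧ ∀ k, k ≠ i → X k (σ k) ≠ 0 := by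
  constructor
  · rintro ⟨h1, h0⟩ i j
    rcases h01 i j with hij | hij
    · obtain ⟨σ, hσ, hX⟩ := h0 i j hij
      exact ⟨σ, hσ, fun k hk => by simp [hX k hk]⟩
    · obtain ⟨σ, hσ, hX⟩ := h1 i j hij
      exact ⟨σ, hσ, fun k _ => hX k⟩
  · intro h
    refine ⟨fun i j hij => ?_, fun i j _ => ?_⟩
    · obtain ⟨σ, rfl, hX⟩ := h i j
      refine ⟨σ, rfl, fun k => ?_⟩
      by_cases hk : k = i
      · simp [hk, hij]
      · exact hX k hk
    · obtain ⟨σ, hσ, hX⟩ := h i j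
      exact ⟨σ, hσ, fun k hk => (h01 k (σ k)).resolve_left (hX k hk)⟩

end

/-- A (0,1)-matrix `X` of order `n ≥ 2` is fully indecomposable iff every
`1` of `X` belongs to a nonzero diagonal and every `0` of `X` belongs to a diagonal whose
other elements all equal `1`. -/
theorem stmt_9 {n : ℕ} (hn : 2 ≤ n) (X : Matrix (Fin n) (Fin n) ℕ) (h01 : ZeroOne X) :
    FullyIndecomposable X ↔
      (∀ i j, X i j = 1 →
        ∃ σ : Equiv.Perm (Fin n), σ i = j ∧ ∀ k, X k (σ k) ≠ 0) ∧
      (∀ i j, X i j = 0 →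
        ∃ σ : Equiv.Perm (Fin n), σ i = j ∧ ∀ k, k ≠ i → X k (σ k) = 1) := by
  rw [fullyIndecomposable_iff_not_hasZeroSubmatrix (by rw [Fintype.card_fin]; omega),
    not_hasZeroSubmatrix_iff, h01.forall_exists_perm_iff]
end

section
/- A fully indecomposable (0,1)-matrix X of order n contains at most n(n−2) zero entries (and this bound is attained, e.g., by the reduced adjacency matrix of the cycle C_{2n} for n ≥ 2). -/
open SimpleGraph

/-- The reduced adjacency matrix of the cycle `C_{2n}`. -/
def cycleMat (n : ℕ) : Matrix (Fin n) (Fin n) ℕ :=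
  fun i j => if j.val = i.val ∨ j.val = (i.val + 1) % n then 1 else 0

/-!
A row of a fully indecomposable matrix of order `n ≥ 2` with `n - 1` zeros would, together with
those `n - 1` columns, form a `1 × (n - 1)` zero submatrix; so every row has at most `n - 2`
zeros. For the cycle matrix, whose row `i` is supported on `{i, i + 1}`, a `k × (n - k)` zero
submatrix on rows `R` and columns `C` forces `R` and `R + 1` into `Cᶜ`, which has `k` elements,
so `R = Cᶜ` is a nonempty set closed under `+ 1` in `ℤ/n`, i.e. everything, leaving no room for `C`.
-/

open Finset

lemma Finset.card_filter_prod_eq_sum {α β : Type*} [Fintype α] [Fintype β] (P : α × β → Prop)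
    [DecidablePred P] : #{p | P p} = ∑ a, #{b | P (a, b)} := by
  simp only [Finset.card_filter, Fintype.sum_prod_type]

section FullyIndecomposable

variable {m : Type*} [Fintype m] {X : Matrix m m ℕ}

lemma hasZeroSubmatrix_of_card_sub_one_le (hm : 2 ≤ Fintype.card m) (i : m)
    (hi : Fintype.card m - 1 ≤ #{j | X i j = 0}) : HasZeroSubmatrix X := by
  obtain ⟨C, hC, hCcard⟩ := exists_subset_card_eq hi
  refine ⟨{i}, C, singleton_nonempty i, card_pos.mp (by omega), by simp [hCcard]; omega, ?_⟩
  intro a ha j hj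
  rw [mem_singleton.mp ha]
  exact (mem_filter.mp (hC hj)).2

lemma FullyIndecomposable.card_zero_row_le (hX : FullyIndecomposable X) (i : m) :
    #{j | X i j = 0} ≤ Fintype.card m - 2 := by
  by_cases hm : 2 ≤ Fintype.card m
  · by_contra! h
    exact hX (.inr (hasZeroSubmatrix_of_card_sub_one_le hm i (by omega)))
  · have hm1 : Fintype.card m = 1 := le_antisymm (by omega) (Fintype.card_pos_iff.mpr ⟨i⟩)
    have : Subsingleton m := Fintype.card_le_one_iff_subsingleton.mp hm1.le
    suffices ∀ j, X i j ≠ 0 by simp [this]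
    intro j hj
    exact hX (.inl ⟨hm1, fun a b => by rwa [Subsingleton.elim a i, Subsingleton.elim b j]⟩)

lemma FullyIndecomposable.card_zero_le (hX : FullyIndecomposable X) :
    #{p : m × m | X p.1 p.2 = 0} ≤ Fintype.card m * (Fintype.card m - 2) := by
  rw [card_filter_prod_eq_sum]
  calc ∑ i, #{j | X i j = 0} ≤ ∑ _i : m, (Fintype.card m - 2) :=
        sum_le_sum fun i _ => hX.card_zero_row_le i
    _ = Fintype.card m * (Fintype.card m - 2) := by rw [sum_const, card_univ, smul_eq_mul]

end FullyIndecomposable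

open Fin.NatCast in
lemma Fin.eq_univ_of_add_one_mem {n : ℕ} [NeZero n] {R : Finset (Fin n)} (hR : R.Nonempty)
    (h : ∀ i ∈ R, i + 1 ∈ R) : R = univ := by
  obtain ⟨i₀, hi₀⟩ := hR
  have hshift : ∀ k : ℕ, i₀ + (k : Fin n) ∈ R := by
    intro k
    induction k with
    | zero => simpa using hi₀
    | succ k ih => simpa [Nat.cast_succ, ← add_assoc] using h _ ih
  refine eq_univ_of_forall fun j => ?_
  simpa using hshift (j - i₀).val

section Cycle

variable {n : ℕ}

lemma cycleMat_eq_zero_iff [NeZero n] {i j : Fin n} : cycleMat n i j = 0 ↔ j ≠ i ∧ j ≠ i + 1 := by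
  have hsucc : (i + 1 : Fin n).val = (i.val + 1) % n := by
    rw [Fin.val_add, Fin.val_one', Nat.add_mod_mod]
  simp only [cycleMat, ← hsucc, Fin.val_inj, ite_eq_right_iff, one_ne_zero, imp_false, not_or]

lemma not_hasZeroSubmatrix_cycleMat [NeZero n] : ¬ HasZeroSubmatrix (cycleMat n) := by
  rintro ⟨R, C, hR, ⟨c, hc⟩, hcard, hzero⟩
  have hdiag : R ⊆ Cᶜ := fun i hi =>
    mem_compl.mpr fun hiC => (cycleMat_eq_zero_iff.mp (hzero i hi i hiC)).1 rfl
  have hRC : R = Cᶜ :=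
    eq_of_subset_of_card_le hdiag (by rw [card_compl]; omega)
  have hclosed : ∀ i ∈ R, i + 1 ∈ R := fun i hi =>
    hRC ▸ mem_compl.mpr fun hiC => (cycleMat_eq_zero_iff.mp (hzero i hi _ hiC)).2 rfl
  have hc' : c ∈ Cᶜ := hRC ▸ Fin.eq_univ_of_add_one_mem hR hclosed ▸ mem_univ c
  exact mem_compl.mp hc' hc

lemma fullyIndecomposable_cycleMat [NeZero n] : FullyIndecomposable (cycleMat n) := by
  rintro (⟨-, h⟩ | h)
  · simpa [cycleMat] using h 0 0
  · exact not_hasZeroSubmatrix_cycleMat h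

lemma card_zero_row_cycleMat (hn : 2 ≤ n) (i : Fin n) :
    #{j | cycleMat n i j = 0} = n - 2 := by
  have : NeZero n := ⟨by omega⟩
  have : Nontrivial (Fin n) := Fin.nontrivial_iff_two_le.mpr hn
  have hrow : ({j | cycleMat n i j = 0} : Finset (Fin n)) = {i, i + 1}ᶜ := by
    ext j
    simp [cycleMat_eq_zero_iff]
  rw [hrow, card_compl, Fintype.card_fin, card_pair (by simp; omega)]

lemma card_zero_cycleMat (hn : 2 ≤ n) :
    #{p : Fin n × Fin n | cycleMat n p.1 p.2 = 0} = n * (n - 2) := by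
  simp [card_filter_prod_eq_sum, card_zero_row_cycleMat hn]

end Cycle

/-- A fully indecomposable (0,1)-matrix of order `n` contains at most
`n (n - 2)` zero entries, and the bound is attained by the reduced adjacency matrix of
the cycle `C_{2n}` for every `n ≥ 2`. -/
theorem stmt_10 :
    (∀ (n : ℕ) (X : Matrix (Fin n) (Fin n) ℕ), ZeroOne X → FullyIndecomposable X →
      (Finset.univ.filter fun p : Fin n × Fin n => X p.1 p.2 = 0).card ≤ n * (n - 2)) ∧
    (∀ n : ℕ, 2 ≤ n → FullyIndecomposable (cycleMat n) ∧
      (Finset.univ.filter fun p : Fin n × Fin n => cycleMat n p.1 p.2 = 0).card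
        = n * (n - 2)) := by
  refine ⟨fun n X _ hX => by simpa using hX.card_zero_le, fun n hn => ?_⟩
  have : NeZero n := ⟨by omega⟩
  exact ⟨fullyIndecomposable_cycleMat, card_zero_cycleMat hn⟩
end

section
/- Let X be a square (0,1)-matrix of order n ≥ 2, and for 1 ≤ i,j ≤ n let X_{ij} denote the matrix obtained from X by deleting the i-th row and the j-th column. Then X is fully indecomposable if and only if per(X_{ij}) > 0 for all i,j. -/
open SimpleGraph

lemma perm_pos_iff {m : Type*} [Fintype m] [DecidableEq m] (A : Matrix m m ℕ) :
    0 < perm A ↔ ∃ σ : Equiv.Perm m, ∀ i, A (σ i) i ≠ 0 := by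
  unfold perm
  constructor
  · intro h
    obtain ⟨σ, -, hσ⟩ := Finset.exists_ne_zero_of_sum_ne_zero h.ne'
    exact ⟨σ, fun i => Finset.prod_ne_zero_iff.mp hσ i (Finset.mem_univ i)⟩
  · rintro ⟨σ, hσ⟩
    have h1 : 0 < ∏ i, A (σ i) i :=
      Nat.pos_of_ne_zero (Finset.prod_ne_zero_iff.mpr fun i _ => hσ i)
    calc 0 < ∏ i, A (σ i) i := h1
      _ ≤ _ := Finset.single_le_sum (f := fun τ : Equiv.Perm m => ∏ i, A (τ i) i)
          (fun τ _ => Nat.zero_le _) (Finset.mem_univ σ)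

lemma perm_pos_iff_hall {m : Type*} [Fintype m] [DecidableEq m] (A : Matrix m m ℕ) :
    0 < perm A ↔
      ∀ s : Finset m,
        s.card ≤ (s.biUnion fun j => Finset.univ.filter fun i => A i j ≠ 0).card := by
  rw [perm_pos_iff, Finset.all_card_le_biUnion_card_iff_exists_injective]
  constructor
  · rintro ⟨σ, hσ⟩
    exact ⟨σ, σ.injective, fun j => Finset.mem_filter.mpr ⟨Finset.mem_univ _, hσ j⟩⟩
  · rintro ⟨f, hf, hmem⟩
    refine ⟨Equiv.ofBijective f (Finite.injective_iff_bijective.mp hf), fun i => ?_⟩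
    exact (Finset.mem_filter.mp (hmem i)).2

/-- A square (0,1)-matrix `X` of order `n + 1 ≥ 2` is fully
indecomposable iff every submatrix obtained by deleting one row and one column has
positive permanent. -/
theorem stmt_14 {n : ℕ} (hn : 1 ≤ n) (X : Matrix (Fin (n + 1)) (Fin (n + 1)) ℕ)
    (h01 : ZeroOne X) :
    FullyIndecomposable X ↔
      ∀ i j : Fin (n + 1), 0 < perm (X.submatrix i.succAbove j.succAbove) := by
  constructor
  · intro hFI i j
    by_contra hperm
    rw [perm_pos_iff_hall] at hperm
    push_neg at hperm
    obtain ⟨S, hS⟩ := hperm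
    set A := X.submatrix i.succAbove j.succAbove with hA
    set t : Fin n → Finset (Fin n) :=
      fun c => Finset.univ.filter fun r => A r c ≠ 0 with ht
    have hSpos : 0 < S.card := lt_of_le_of_lt (Nat.zero_le _) hS
    have hSle : S.card ≤ n := le_trans (Finset.card_le_card (Finset.subset_univ S)) (by simp)
    set C : Finset (Fin (n + 1)) := S.image j.succAbove with hC
    have hCcard : C.card = S.card :=
      Finset.card_image_of_injective _ (Fin.succAbove_right_injective)
    set N : Finset (Fin (n + 1)) := (S.biUnion t).image i.succAbove with hN
    have hNcard : N.card < S.card :=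
      lt_of_le_of_lt (Finset.card_image_le) hS
    set R0 : Finset (Fin (n + 1)) := Finset.univ \ insert i N with hR0
    have hR0card : n + 1 - S.card ≤ R0.card := by
      have h1 : (insert i N).card ≤ N.card + 1 := by
        simpa using Finset.card_insert_le i N
      have h2 : R0.card = (n + 1) - (insert i N).card := by
        rw [hR0, Finset.card_sdiff_of_subset (Finset.subset_univ _)]
        simp
      omega
    obtain ⟨R, hRsub, hRcard⟩ := Finset.exists_subset_card_eq hR0card
    apply hFI
    right
    refine ⟨R, C, ?_, ?_, ?_, ?_⟩
    · rw [← Finset.card_pos, hRcard]; omega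
    · rw [← Finset.card_pos, hCcard]; omega
    · rw [hRcard, hCcard, Fintype.card_fin]; omega
    · intro r hr c hc
      obtain ⟨c', hc', rfl⟩ := Finset.mem_image.mp hc
      have hrR0 := hRsub hr
      rw [hR0, Finset.mem_sdiff, Finset.mem_insert] at hrR0
      push_neg at hrR0
      obtain ⟨-, hri, hrN⟩ := hrR0
      obtain ⟨r', rfl⟩ := Fin.exists_succAbove_eq hri
      by_contra hne
      apply hrN
      rw [hN]
      refine Finset.mem_image.mpr ⟨r', ?_, rfl⟩
      refine Finset.mem_biUnion.mpr ⟨c', hc', ?_⟩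
      rw [ht]
      simp only [Finset.mem_filter, Finset.mem_univ, true_and]
      simpa [hA, Matrix.submatrix_apply] using hne
  · intro hpos hPD
    rcases hPD with ⟨h1, -⟩ | ⟨R, C, hRne, hCne, hsum, hzero⟩
    · rw [Fintype.card_fin] at h1; omega
    · rw [Fintype.card_fin] at hsum
      have hCpos : 0 < C.card := Finset.card_pos.mpr hCne
      have hRpos : 0 < R.card := Finset.card_pos.mpr hRne
      obtain ⟨i, hi⟩ : ∃ i, i ∉ R := by
        by_contra h
        push_neg at h
        have hRu : R = Finset.univ := Finset.eq_univ_of_forall h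
        rw [hRu, Finset.card_univ, Fintype.card_fin] at hsum
        omega
      obtain ⟨j, hj⟩ : ∃ j, j ∉ C := by
        by_contra h
        push_neg at h
        have hCu : C = Finset.univ := Finset.eq_univ_of_forall h
        rw [hCu, Finset.card_univ, Fintype.card_fin] at hsum
        omega
      obtain ⟨σ, hσ⟩ := (perm_pos_iff _).mp (hpos i j)
      simp only [Matrix.submatrix_apply] at hσ
      set C' : Finset (Fin n) := Finset.univ.filter fun k => j.succAbove k ∈ C with hC'
      have himg : C'.image j.succAbove = C := by
        apply Finset.Subset.antisymm
        · intro c hc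
          obtain ⟨k, hk, rfl⟩ := Finset.mem_image.mp hc
          exact (Finset.mem_filter.mp hk).2
        · intro c hc
          have hcj : c ≠ j := fun h => hj (h ▸ hc)
          obtain ⟨k, hk⟩ := Fin.exists_succAbove_eq hcj
          exact Finset.mem_image.mpr
            ⟨k, Finset.mem_filter.mpr ⟨Finset.mem_univ _, by rw [hk]; exact hc⟩, hk⟩
      have hC'card : C'.card = C.card := by
        rw [← himg]
        exact (Finset.card_image_of_injective _ Fin.succAbove_right_injective).symm
      set R' : Finset (Fin (n + 1)) := C'.image (fun k => i.succAbove (σ k)) with hR'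
      have hR'card : R'.card = C.card := by
        rw [hR', ← hC'card]
        exact Finset.card_image_of_injective _
          (Fin.succAbove_right_injective.comp σ.injective)
      have hsub : R' ⊆ (insert i R)ᶜ := by
        intro r hr
        obtain ⟨k, hk, rfl⟩ := Finset.mem_image.mp hr
        rw [Finset.mem_compl, Finset.mem_insert]
        push_neg
        refine ⟨Fin.succAbove_ne i (σ k), fun hmem => ?_⟩
        exact hσ k (hzero _ hmem _ ((Finset.mem_filter.mp hk).2))
      have hle := Finset.card_le_card hsub
      rw [hR'card, Finset.card_compl, Finset.card_insert_of_notMem hi,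
        Fintype.card_fin] at hle
      omega
end

section
/- Let G=(A,B,E) and H=(B,C,F) be balanced bipartite graphs on 2n vertices sharing the color class B, and let G*H=(A,C,W) be their join, where ac ∈ W iff there exists b ∈ B with ab ∈ E and bc ∈ F. Then: (i) if G and H are α⁺-stable, then G*H is α⁺-stable; (ii) if one of G, H is α⁺-stable and the other is bistable bipartite, then G*H is bistable bipartite; (iii) if G and H are bistable bipartite, then G*H is bistable bipartite. -/
open SimpleGraph

/-- The Boolean product of two (0,1)-matrices; it is the reduced adjacency matrix of the
join `G * H` of the bipartite graphs `G`, `H` with reduced adjacency matrices `X`, `Y`. -/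
def boolProd {n : ℕ} (X Y : Matrix (Fin n) (Fin n) ℕ) : Matrix (Fin n) (Fin n) ℕ :=
  fun i j => if ∃ k, X i k = 1 ∧ Y k j = 1 then 1 else 0

set_option linter.unusedSectionVars false
set_option linter.unusedVariables false
namespace S17
open Sum

variable {n : ℕ} {X : Matrix (Fin n) (Fin n) ℕ}

lemma adj_inl_inr (X : Matrix (Fin n) (Fin n) ℕ) (i j : Fin n) :
    (matGraph X).Adj (inl i) (inr j) ↔ X i j = 1 := by
  simp [matGraph, fromRel_adj]

lemma adj_inl_inl (X : Matrix (Fin n) (Fin n) ℕ) (i j : Fin n) :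
    ¬ (matGraph X).Adj (inl i) (inl j) := by
  simp [matGraph, fromRel_adj]

lemma adj_inr_inr (X : Matrix (Fin n) (Fin n) ℕ) (i j : Fin n) :
    ¬ (matGraph X).Adj (inr i) (inr j) := by
  simp [matGraph, fromRel_adj]

lemma isStableSet_iff (X : Matrix (Fin n) (Fin n) ℕ) (S : Set (Fin n ⊕ Fin n)) :
    IsStableSet (matGraph X) S ↔ ∀ i j, inl i ∈ S → inr j ∈ S → X i j ≠ 1 := by
  constructor
  · intro h i j hi hj hXij
    exact h hi hj (by simp) ((adj_inl_inr X i j).2 hXij)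
  · rintro h (i | j) hu (i' | j') hv hne hadj
    · exact adj_inl_inl X i i' hadj
    · exact h i j' hu hv ((adj_inl_inr X i j').1 hadj)
    · exact h i' j hv hu ((adj_inl_inr X i' j).1 hadj.symm)
    · exact adj_inr_inr X j j' hadj
variable {n : ℕ}

noncomputable def rowsOf (S : Set (Fin n ⊕ Fin n)) : Finset (Fin n) :=
  (Set.toFinite (Sum.inl ⁻¹' S)).toFinset
noncomputable def colsOf (S : Set (Fin n ⊕ Fin n)) : Finset (Fin n) :=
  (Set.toFinite (Sum.inr ⁻¹' S)).toFinset

lemma mem_rowsOf {S : Set (Fin n ⊕ Fin n)} {i : Fin n} : i ∈ rowsOf S ↔ inl i ∈ S :=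
  Set.Finite.mem_toFinset _
lemma mem_colsOf {S : Set (Fin n ⊕ Fin n)} {j : Fin n} : j ∈ colsOf S ↔ inr j ∈ S :=
  Set.Finite.mem_toFinset _

def pairSet (I J : Finset (Fin n)) : Set (Fin n ⊕ Fin n) :=
  Sum.inl '' ↑I ∪ Sum.inr '' ↑J

lemma mem_pairSet_inl {I J : Finset (Fin n)} {i : Fin n} :
    inl i ∈ pairSet I J ↔ i ∈ I := by simp [pairSet]
lemma mem_pairSet_inr {I J : Finset (Fin n)} {j : Fin n} :
    inr j ∈ pairSet I J ↔ j ∈ J := by simp [pairSet]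

lemma ncard_pairSet (I J : Finset (Fin n)) : (pairSet I J).ncard = I.card + J.card := by
  rw [pairSet, Set.ncard_union_eq ?_ (Set.toFinite _) (Set.toFinite _),
    Set.ncard_image_of_injective _ Sum.inl_injective,
    Set.ncard_image_of_injective _ Sum.inr_injective,
    Set.ncard_coe_finset, Set.ncard_coe_finset]
  rw [Set.disjoint_left]
  rintro _ ⟨i, _, rfl⟩ ⟨j, _, h⟩
  exact (inr_ne_inl h).elim

lemma eq_pairSet (S : Set (Fin n ⊕ Fin n)) : S = pairSet (rowsOf S) (colsOf S) := by
  ext u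
  rcases u with i | j
  · simp [mem_pairSet_inl, mem_rowsOf]
  · simp [mem_pairSet_inr, mem_colsOf]

lemma ncard_decomp (S : Set (Fin n ⊕ Fin n)) :
    S.ncard = (rowsOf S).card + (colsOf S).card := by
  conv_lhs => rw [eq_pairSet S]
  exact ncard_pairSet _ _
variable {V : Type*} [Finite V] {G : SimpleGraph V}

lemma stab_bdd (G : SimpleGraph V) :
    BddAbove {k | ∃ S : Set V, IsStableSet G S ∧ S.ncard = k} := by
  refine ⟨Nat.card V, ?_⟩
  rintro k ⟨S, _, rfl⟩
  simpa using Set.ncard_le_ncard (Set.subset_univ S) (Set.toFinite _) |>.trans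
    (Set.ncard_univ V).le

lemma le_stabNum {S : Set V} (hS : IsStableSet G S) : S.ncard ≤ stabNum G :=
  le_csSup (stab_bdd G) ⟨S, hS, rfl⟩

lemma exists_max (G : SimpleGraph V) : ∃ S : Set V, IsMaxStableSet G S := by
  have h := Nat.sSup_mem (s := {k | ∃ S : Set V, IsStableSet G S ∧ S.ncard = k})
    ⟨0, ∅, Set.pairwise_empty _, by simp⟩ (stab_bdd G)
  obtain ⟨S, hS, hc⟩ := h
  exact ⟨S, hS, hc⟩

lemma stable_mono {G' : SimpleGraph V} (h : G ≤ G') {S : Set V}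
    (hS : IsStableSet G' S) : IsStableSet G S :=
  fun u hu v hv hne hadj => hS hu hv hne (h hadj)

lemma stabNum_mono {G' : SimpleGraph V} (h : G ≤ G') : stabNum G' ≤ stabNum G := by
  obtain ⟨S, hS, hc⟩ := exists_max G'
  exact hc ▸ le_stabNum (stable_mono h hS)

lemma adj_addEdge {x y u v : V} :
    (G ⊔ fromEdgeSet {s(x, y)}).Adj u v ↔
      G.Adj u v ∨ ((u = x ∧ v = y ∨ u = y ∧ v = x) ∧ u ≠ v) := by
  simp [Sym2.eq_iff]

lemma stabNum_addEdge_eq {x y : V} {S : Set V} (hS : IsMaxStableSet G S)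
    (h : x ∉ S ∨ y ∉ S) : stabNum (G ⊔ fromEdgeSet {s(x, y)}) = stabNum G := by
  refine le_antisymm (stabNum_mono le_sup_left) ?_
  rw [← hS.2]
  refine le_stabNum (fun u hu v hv hne hadj => ?_)
  rcases adj_addEdge.1 hadj with hG | ⟨hp, _⟩
  · exact hS.1 hu hv hne hG
  · rcases hp with ⟨rfl, rfl⟩ | ⟨rfl, rfl⟩
    · rcases h with h | h <;> [exact h hu; exact h hv]
    · rcases h with h | h <;> [exact h hv; exact h hu]

lemma stabNum_addEdge_ne {x y : V} (hxy : x ≠ y)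
    (h : ∀ S : Set V, IsMaxStableSet G S → x ∈ S ∧ y ∈ S) :
    stabNum (G ⊔ fromEdgeSet {s(x, y)}) ≠ stabNum G := by
  obtain ⟨S, hS, hc⟩ := exists_max (G ⊔ fromEdgeSet {s(x, y)})
  have hSG : IsStableSet G S := stable_mono le_sup_left hS
  have hle : S.ncard ≤ stabNum G := le_stabNum hSG
  intro heq
  have hmax : IsMaxStableSet G S := ⟨hSG, by omega⟩
  obtain ⟨hx, hy⟩ := h S hmax
  exact hS hx hy hxy (adj_addEdge.2 (Or.inr ⟨Or.inl ⟨rfl, rfl⟩, hxy⟩))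

def HasPerm {n : ℕ} (X : Matrix (Fin n) (Fin n) ℕ) : Prop :=
  ∃ σ : Equiv.Perm (Fin n), ∀ i, X i (σ i) = 1

def ZOn {n : ℕ} (X : Matrix (Fin n) (Fin n) ℕ) (I J : Finset (Fin n)) : Prop :=
  ∀ i ∈ I, ∀ j ∈ J, X i j = 0

def FI {n : ℕ} (X : Matrix (Fin n) (Fin n) ℕ) : Prop :=
  ∀ I J : Finset (Fin n), I.Nonempty → J.Nonempty → ZOn X I J → I.card + J.card < n

variable {n : ℕ} {X : Matrix (Fin n) (Fin n) ℕ}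

lemma stable_pairSet (h : ∀ i ∈ I, ∀ j ∈ J, X i j ≠ 1) :
    IsStableSet (matGraph X) (pairSet I J) := by
  rw [isStableSet_iff]
  intro i j hi hj
  exact h i (mem_pairSet_inl.1 hi) j (mem_pairSet_inr.1 hj)

lemma stable_rangeInl : IsStableSet (matGraph X) (Set.range inl) := by
  rw [isStableSet_iff]
  rintro i j - ⟨k, hk⟩
  exact absurd hk (Sum.inl_ne_inr)

lemma stable_rangeInr : IsStableSet (matGraph X) (Set.range inr) := by
  rw [isStableSet_iff]
  rintro i j ⟨k, hk⟩ -
  exact absurd hk (Sum.inr_ne_inl)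

lemma ncard_rangeInl : (Set.range (inl : Fin n → Fin n ⊕ Fin n)).ncard = n := by
  rw [← Set.image_univ, Set.ncard_image_of_injective _ Sum.inl_injective, Set.ncard_univ,
    Nat.card_eq_fintype_card, Fintype.card_fin]

lemma ncard_rangeInr : (Set.range (inr : Fin n → Fin n ⊕ Fin n)).ncard = n := by
  rw [← Set.image_univ, Set.ncard_image_of_injective _ Sum.inr_injective, Set.ncard_univ,
    Nat.card_eq_fintype_card, Fintype.card_fin]

lemma n_le_stabNum (X : Matrix (Fin n) (Fin n) ℕ) : n ≤ stabNum (matGraph X) := by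
  have h := le_stabNum (stable_rangeInl (X := X))
  rwa [ncard_rangeInl] at h

lemma zOn_le (h : ZOn X I J) : I.card + J.card ≤ stabNum (matGraph X) := by
  rw [← ncard_pairSet]
  exact le_stabNum (stable_pairSet fun i hi j hj => by rw [h i hi j hj]; exact zero_ne_one)

lemma stabNum_eq_of_hasPerm (hp : HasPerm X) : stabNum (matGraph X) = n := by
  refine le_antisymm ?_ (n_le_stabNum X)
  obtain ⟨S, hS, hc⟩ := exists_max (matGraph X)
  obtain ⟨σ, hσ⟩ := hp
  rw [← hc, ncard_decomp]
  set I := rowsOf S; set J := colsOf S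
  by_cases hd : ∀ i ∈ I, σ i ∉ J
  · have : Disjoint (I.image σ) J := Finset.disjoint_left.2 (by
      rintro j hj; obtain ⟨i, hi, rfl⟩ := Finset.mem_image.1 hj; exact hd i hi)
    calc I.card + J.card = (I.image σ).card + J.card := by
            rw [Finset.card_image_of_injective _ σ.injective]
      _ = (I.image σ ∪ J).card := (Finset.card_union_of_disjoint this).symm
      _ ≤ Fintype.card (Fin n) := Finset.card_le_univ _
      _ = n := Fintype.card_fin n
  · push_neg at hd
    obtain ⟨i, hi, hσi⟩ := hd
    exact absurd (hσ i)
      ((isStableSet_iff X S).1 hS i (σ i) (mem_rowsOf.1 hi) (mem_colsOf.1 hσi))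

lemma alphaPlus_of_hasPerm (hp : HasPerm X) : AlphaPlusStable (matGraph X) := by
  intro x y hne hnadj
  have hA : IsMaxStableSet (matGraph X) (Set.range inl) :=
    ⟨stable_rangeInl, by rw [ncard_rangeInl, stabNum_eq_of_hasPerm hp]⟩
  have hB : IsMaxStableSet (matGraph X) (Set.range inr) :=
    ⟨stable_rangeInr, by rw [ncard_rangeInr, stabNum_eq_of_hasPerm hp]⟩
  rcases x with i | j
  · rcases y with i' | j'
    · exact stabNum_addEdge_eq hB (Or.inl (by simp))
    · exact stabNum_addEdge_eq hA (Or.inr (by simp))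
  · exact stabNum_addEdge_eq hA (Or.inl (by simp))

lemma hall_step (hX : ZeroOne X) (hnp : ¬ HasPerm X) :
    ∃ I J : Finset (Fin n), ZOn X I J ∧ n + 1 ≤ I.card + J.card := by
  classical
  set t : Fin n → Finset (Fin n) := fun i => Finset.univ.filter fun j => X i j = 1 with ht
  by_cases hall : ∀ s : Finset (Fin n), s.card ≤ (s.biUnion t).card
  · exfalso
    obtain ⟨f, hinj, hf⟩ := (Finset.all_card_le_biUnion_card_iff_exists_injective t).1 hall
    refine hnp ⟨Equiv.ofBijective f ((Finite.injective_iff_bijective).1 hinj), fun i => ?_⟩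
    have := hf i
    simpa [ht] using this
  · push_neg at hall
    obtain ⟨s, hs⟩ := hall
    refine ⟨s, (s.biUnion t)ᶜ, ?_, ?_⟩
    · intro i hi j hj
      rcases hX i j with h | h
      · exact h
      · exact absurd (Finset.mem_biUnion.2 ⟨i, hi, by simp [ht, h]⟩)
          (Finset.mem_compl.1 hj)
    · have h1 : (s.biUnion t).card < s.card := hs
      have h2 : ((s.biUnion t)ᶜ).card = n - (s.biUnion t).card := by
        rw [Finset.card_compl, Fintype.card_fin]
      have h3 : (s.biUnion t).card ≤ n := by
        simpa using Finset.card_le_univ (s.biUnion t)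
      omega

def MaxZ (X : Matrix (Fin n) (Fin n) ℕ) (I J : Finset (Fin n)) : Prop :=
  ZOn X I J ∧ I.card + J.card = stabNum (matGraph X)

lemma maxZ_meet (h1 : MaxZ X I₁ J₁) (h2 : MaxZ X I₂ J₂) :
    MaxZ X (I₁ ∩ I₂) (J₁ ∪ J₂) := by
  have hz : ZOn X (I₁ ∩ I₂) (J₁ ∪ J₂) := by
    intro i hi j hj
    rcases Finset.mem_union.1 hj with hj | hj
    · exact h1.1 i (Finset.mem_inter.1 hi).1 j hj
    · exact h2.1 i (Finset.mem_inter.1 hi).2 j hj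
  have hz' : ZOn X (I₁ ∪ I₂) (J₁ ∩ J₂) := by
    intro i hi j hj
    rcases Finset.mem_union.1 hi with hi | hi
    · exact h1.1 i hi j (Finset.mem_inter.1 hj).1
    · exact h2.1 i hi j (Finset.mem_inter.1 hj).2
  have l1 := zOn_le hz
  have l2 := zOn_le hz'
  have e1 : (I₁ ∩ I₂).card + (I₁ ∪ I₂).card = I₁.card + I₂.card :=
    Finset.card_inter_add_card_union _ _
  have e2 : (J₁ ∩ J₂).card + (J₁ ∪ J₂).card = J₁.card + J₂.card :=
    Finset.card_inter_add_card_union _ _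
  have c1 := h1.2; have c2 := h2.2
  exact ⟨hz, by omega⟩

lemma maxZ_join (h1 : MaxZ X I₁ J₁) (h2 : MaxZ X I₂ J₂) :
    MaxZ X (I₁ ∪ I₂) (J₁ ∩ J₂) := by
  have hm := maxZ_meet h1 h2
  have hz' : ZOn X (I₁ ∪ I₂) (J₁ ∩ J₂) := by
    intro i hi j hj
    rcases Finset.mem_union.1 hi with hi | hi
    · exact h1.1 i hi j (Finset.mem_inter.1 hj).1
    · exact h2.1 i hi j (Finset.mem_inter.1 hj).2
  have e1 : (I₁ ∩ I₂).card + (I₁ ∪ I₂).card = I₁.card + I₂.card :=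
    Finset.card_inter_add_card_union _ _
  have e2 : (J₁ ∩ J₂).card + (J₁ ∪ J₂).card = J₁.card + J₂.card :=
    Finset.card_inter_add_card_union _ _
  have l1 := zOn_le hz'
  have hm2 := hm.2
  have c1 := h1.2; have c2 := h2.2
  exact ⟨hz', by omega⟩

lemma maxZ_of_max (hX : ZeroOne X) {S : Set (Fin n ⊕ Fin n)}
    (hS : IsMaxStableSet (matGraph X) S) : MaxZ X (rowsOf S) (colsOf S) := by
  refine ⟨fun i hi j hj => ?_, by rw [← ncard_decomp, hS.2]⟩
  rcases hX i j with h | h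
  · exact h
  · exact absurd h ((isStableSet_iff X S).1 hS.1 i j (mem_rowsOf.1 hi) (mem_colsOf.1 hj))

lemma hasPerm_of_alphaPlus (hX : ZeroOne X) (ha : AlphaPlusStable (matGraph X)) :
    HasPerm X := by
  classical
  by_contra hnp
  obtain ⟨I, J, hz, hcard⟩ := hall_step hX hnp
  have halpha : n + 1 ≤ stabNum (matGraph X) := le_trans hcard (zOn_le hz)
  -- minimal-row maximum zero submatrix
  have hne : {c | ∃ I J : Finset (Fin n), MaxZ X I J ∧ I.card = c}.Nonempty := by
    obtain ⟨S, hS⟩ := exists_max (matGraph X)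
    exact ⟨_, _, _, maxZ_of_max hX hS, rfl⟩
  obtain ⟨I₀, J₀, hm0, hc0⟩ := Nat.sInf_mem hne
  have hmin0 : ∀ I' J' : Finset (Fin n), MaxZ X I' J' → I₀ ⊆ I' := by
    intro I' J' hm'
    have hmeet := maxZ_meet hm0 hm'
    have hle : sInf {c | ∃ I J : Finset (Fin n), MaxZ X I J ∧ I.card = c} ≤ (I₀ ∩ I').card :=
      Nat.sInf_le ⟨_, _, hmeet, rfl⟩
    have : I₀.card ≤ (I₀ ∩ I').card := by omega
    have heq : I₀ ∩ I' = I₀ :=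
      Finset.eq_of_subset_of_card_le (Finset.inter_subset_left) this
    rw [← heq]
    exact Finset.inter_subset_right
  -- minimal-col maximum zero submatrix
  have hne' : {c | ∃ I J : Finset (Fin n), MaxZ X I J ∧ J.card = c}.Nonempty := by
    obtain ⟨S, hS⟩ := exists_max (matGraph X)
    exact ⟨_, _, _, maxZ_of_max hX hS, rfl⟩
  obtain ⟨I₁, J₁, hm1, hc1⟩ := Nat.sInf_mem hne'
  have hmin1 : ∀ I' J' : Finset (Fin n), MaxZ X I' J' → J₁ ⊆ J' := by
    intro I' J' hm'
    have hjoin := maxZ_join hm1 hm'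
    have hle : sInf {c | ∃ I J : Finset (Fin n), MaxZ X I J ∧ J.card = c} ≤ (J₁ ∩ J').card :=
      Nat.sInf_le ⟨_, _, hjoin, rfl⟩
    have : J₁.card ≤ (J₁ ∩ J').card := by omega
    have heq : J₁ ∩ J' = J₁ :=
      Finset.eq_of_subset_of_card_le (Finset.inter_subset_left) this
    rw [← heq]
    exact Finset.inter_subset_right
  -- nonemptiness
  have hJ0n : J₀.card ≤ n := by simpa using Finset.card_le_univ J₀
  have hI1n : I₁.card ≤ n := by simpa using Finset.card_le_univ I₁
  have hI0 : I₀.Nonempty := Finset.card_pos.1 (by have := hm0.2; omega)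
  have hJ1 : J₁.Nonempty := Finset.card_pos.1 (by have := hm1.2; omega)
  obtain ⟨i, hi⟩ := hI0
  obtain ⟨j, hj⟩ := hJ1
  have hij : X i j = 0 := hm1.1 i (hmin0 _ _ hm1 hi) j hj
  have hnadj : ¬ (matGraph X).Adj (inl i) (inr j) := by
    rw [adj_inl_inr, hij]; exact zero_ne_one
  refine stabNum_addEdge_ne Sum.inl_ne_inr ?_ (ha (inl i) (inr j) Sum.inl_ne_inr hnadj)
  intro S hS
  have hmz := maxZ_of_max hX hS
  exact ⟨mem_rowsOf.1 (hmin0 _ _ hmz hi), mem_colsOf.1 (hmin1 _ _ hmz hj)⟩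

lemma bipartition_matGraph (X : Matrix (Fin n) (Fin n) ℕ) :
    IsBipartition (matGraph X) (Set.range inl) (Set.range inr) := by
  refine ⟨?_, ?_, ?_⟩
  · rw [Set.disjoint_left]; rintro u ⟨i, rfl⟩ ⟨j, hj⟩; exact inr_ne_inl hj
  · ext u; rcases u with i | j <;> simp
  · intro x y hadj
    rcases x with i | j <;> rcases y with i' | j'
    · exact absurd hadj (adj_inl_inl X i i')
    · exact Or.inl ⟨⟨i, rfl⟩, ⟨j', rfl⟩⟩
    · exact Or.inr ⟨⟨j, rfl⟩, ⟨i', rfl⟩⟩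
    · exact absurd hadj (adj_inr_inr X j j')

lemma zOn_of_stable (hX : ZeroOne X) {S : Set (Fin n ⊕ Fin n)}
    (hS : IsStableSet (matGraph X) S) : ZOn X (rowsOf S) (colsOf S) := by
  intro i hi j hj
  rcases hX i j with h | h
  · exact h
  · exact absurd h ((isStableSet_iff X S).1 hS i j (mem_rowsOf.1 hi) (mem_colsOf.1 hj))

lemma pairSet_empty_univ : pairSet (∅ : Finset (Fin n)) Finset.univ = Set.range inr := by
  ext u; rcases u with i | j <;> simp [pairSet]

lemma pairSet_univ_empty : pairSet (Finset.univ : Finset (Fin n)) ∅ = Set.range inl := by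
  ext u; rcases u with i | j <;> simp [pairSet]

lemma bistable_of_fi (hX : ZeroOne X) (hfi : FI X) :
    BistableBipartite (matGraph X) (Set.range inl) (Set.range inr) := by
  have hub : ∀ S : Set (Fin n ⊕ Fin n), IsStableSet (matGraph X) S →
      (rowsOf S).Nonempty → (colsOf S).Nonempty → False → True := fun _ _ _ _ _ => trivial
  have hstab : stabNum (matGraph X) = n := by
    refine le_antisymm ?_ (n_le_stabNum X)
    obtain ⟨S, hS, hc⟩ := exists_max (matGraph X)
    rw [← hc, ncard_decomp]
    have hrn : (rowsOf S).card ≤ n := by simpa using Finset.card_le_univ (rowsOf S)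
    have hcn : (colsOf S).card ≤ n := by simpa using Finset.card_le_univ (colsOf S)
    rcases Finset.eq_empty_or_nonempty (rowsOf S) with he | hne
    · rw [he]; simpa using hcn
    rcases Finset.eq_empty_or_nonempty (colsOf S) with he | hne'
    · rw [he]; simpa using hrn
    exact (hfi _ _ hne hne' (zOn_of_stable hX hS)).le
  refine ⟨bipartition_matGraph X, fun S => ⟨?_, ?_⟩⟩
  · rintro ⟨hS, hc⟩
    rw [hstab] at hc
    have hdec := ncard_decomp S
    rcases Finset.eq_empty_or_nonempty (rowsOf S) with he | hne
    · right
      have hcoln : (colsOf S).card = n := by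
        rw [hc] at hdec; rw [he] at hdec; simpa using hdec.symm
      have hcu : colsOf S = Finset.univ :=
        Finset.eq_univ_of_card _ (by rw [hcoln, Fintype.card_fin])
      rw [eq_pairSet S, he, hcu, pairSet_empty_univ]
    rcases Finset.eq_empty_or_nonempty (colsOf S) with he' | hne'
    · left
      have hrown : (rowsOf S).card = n := by
        rw [hc] at hdec; rw [he'] at hdec; simpa using hdec.symm
      have hru : rowsOf S = Finset.univ :=
        Finset.eq_univ_of_card _ (by rw [hrown, Fintype.card_fin])
      rw [eq_pairSet S, he', hru, pairSet_univ_empty]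
    · exfalso
      have := hfi _ _ hne hne' (zOn_of_stable hX hS)
      omega
  · rintro (rfl | rfl)
    · exact ⟨stable_rangeInl, by rw [ncard_rangeInl, hstab]⟩
    · exact ⟨stable_rangeInr, by rw [ncard_rangeInr, hstab]⟩

lemma fi_of_bistable
    (hb : BistableBipartite (matGraph X) (Set.range inl) (Set.range inr)) : FI X := by
  obtain ⟨hbp, hmax⟩ := hb
  have hA : IsMaxStableSet (matGraph X) (Set.range inl) := (hmax _).2 (Or.inl rfl)
  have hstab : stabNum (matGraph X) = n := by rw [← hA.2, ncard_rangeInl]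
  intro I J hI hJ hz
  by_contra hc
  push_neg at hc
  have hle := zOn_le hz
  rw [hstab] at hle
  have hcard : I.card + J.card = n := by omega
  have hmaxS : IsMaxStableSet (matGraph X) (pairSet I J) :=
    ⟨stable_pairSet (fun i hi j hj => by rw [hz i hi j hj]; exact zero_ne_one),
      by rw [ncard_pairSet, hstab, hcard]⟩
  rcases (hmax _).1 hmaxS with hA' | hB'
  · obtain ⟨j, hj⟩ := hJ
    have hm : inr j ∈ Set.range (inl : Fin n → Fin n ⊕ Fin n) := hA' ▸ mem_pairSet_inr.2 hj
    obtain ⟨i, hi⟩ := hm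
    exact inl_ne_inr hi
  · obtain ⟨i, hi⟩ := hI
    have hm : inl i ∈ Set.range (inr : Fin n → Fin n ⊕ Fin n) := hB' ▸ mem_pairSet_inl.2 hi
    obtain ⟨j, hj⟩ := hm
    exact inr_ne_inl hj

variable {Y : Matrix (Fin n) (Fin n) ℕ}

lemma boolProd_eq_zero {i j : Fin n} :
    boolProd X Y i j = 0 ↔ ¬ ∃ k, X i k = 1 ∧ Y k j = 1 := by
  unfold boolProd
  split <;> simp_all

lemma zeroOne_boolProd (X Y : Matrix (Fin n) (Fin n) ℕ) : ZeroOne (boolProd X Y) := by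
  intro i j
  unfold boolProd
  split
  · exact Or.inr rfl
  · exact Or.inl rfl

lemma hasPerm_boolProd (hpX : HasPerm X) (hpY : HasPerm Y) : HasPerm (boolProd X Y) := by
  obtain ⟨σ, hσ⟩ := hpX; obtain ⟨τ, hτ⟩ := hpY
  refine ⟨σ.trans τ, fun i => ?_⟩
  have h : ∃ k, X i k = 1 ∧ Y k (τ (σ i)) = 1 := ⟨σ i, hσ i, hτ (σ i)⟩
  simp [boolProd, Equiv.trans_apply, h]

lemma fi_boolProd_left (hX : ZeroOne X) (hY : ZeroOne Y) (hfiY : FI Y)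
    (h : FI X ∨ HasPerm X) : FI (boolProd X Y) := by
  classical
  intro I J hI hJ hz
  by_contra hc
  push_neg at hc
  have hJ1 : 1 ≤ J.card := Finset.card_pos.2 hJ
  have hI1 : 1 ≤ I.card := Finset.card_pos.2 hI
  set K : Finset (Fin n) := Finset.univ.filter (fun k => ∀ i ∈ I, X i k = 0) with hK
  have hYz : ZOn Y Kᶜ J := by
    intro k hk j hj
    have hk' : ¬ ∀ i ∈ I, X i k = 0 := by simpa [hK] using Finset.mem_compl.1 hk
    push_neg at hk'
    obtain ⟨i, hi, hXik⟩ := hk'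
    have hXik1 : X i k = 1 := (hX i k).resolve_left hXik
    rcases hY k j with h0 | h1
    · exact h0
    · exfalso
      have hzz := hz i hi j hj
      rw [boolProd_eq_zero] at hzz
      exact hzz ⟨k, hXik1, h1⟩
  have hKcard : Kᶜ.card = n - K.card := by rw [Finset.card_compl, Fintype.card_fin]
  have hIn : I.card ≤ n := by simpa using Finset.card_le_univ I
  rcases h with hfiX | ⟨σ, hσ⟩
  · rcases Finset.eq_empty_or_nonempty K with hKe | hKne
    · have hK0 : K.card = 0 := by rw [hKe]; simp
      have hKc : Kᶜ.Nonempty := Finset.card_pos.1 (by omega)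
      have := hfiY Kᶜ J hKc hJ hYz
      omega
    · have hXz : ZOn X I K := fun i hi k hk => (Finset.mem_filter.1 hk).2 i hi
      have h1 := hfiX I K hI hKne hXz
      have hKn : K.card ≤ n := by simpa using Finset.card_le_univ K
      have hKc : Kᶜ.Nonempty := Finset.card_pos.1 (by omega)
      have h2 := hfiY Kᶜ J hKc hJ hYz
      omega
  · have hsub : I.image σ ⊆ Kᶜ := by
      intro k hk
      obtain ⟨i, hi, rfl⟩ := Finset.mem_image.1 hk
      rw [Finset.mem_compl, hK, Finset.mem_filter]
      push_neg
      intro _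
      exact ⟨i, hi, by rw [hσ i]; exact one_ne_zero⟩
    have hcardim : I.card ≤ Kᶜ.card := by
      rw [← Finset.card_image_of_injective I σ.injective]
      exact Finset.card_le_card hsub
    have hKc : Kᶜ.Nonempty := by
      obtain ⟨i, hi⟩ := hI
      exact ⟨σ i, hsub (Finset.mem_image_of_mem σ hi)⟩
    have := hfiY Kᶜ J hKc hJ hYz
    omega

lemma fi_boolProd_right (hX : ZeroOne X) (hY : ZeroOne Y) (hfiX : FI X)
    (hp : HasPerm Y) : FI (boolProd X Y) := by
  classical
  intro I J hI hJ hz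
  by_contra hc
  push_neg at hc
  obtain ⟨τ, hτ⟩ := hp
  set K : Finset (Fin n) := Finset.univ.filter (fun k => ∀ j ∈ J, Y k j = 0) with hK
  have hXz : ZOn X I Kᶜ := by
    intro i hi k hk
    have hk' : ¬ ∀ j ∈ J, Y k j = 0 := by simpa [hK] using Finset.mem_compl.1 hk
    push_neg at hk'
    obtain ⟨j, hj, hYkj⟩ := hk'
    have hY1 : Y k j = 1 := (hY k j).resolve_left hYkj
    rcases hX i k with h0 | h1
    · exact h0
    · exfalso
      have hzz := hz i hi j hj
      rw [boolProd_eq_zero] at hzz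
      exact hzz ⟨k, h1, hY1⟩
  have hsub : J.image τ.symm ⊆ Kᶜ := by
    intro k hk
    obtain ⟨j, hj, rfl⟩ := Finset.mem_image.1 hk
    rw [Finset.mem_compl, hK, Finset.mem_filter]
    push_neg
    intro _
    refine ⟨j, hj, ?_⟩
    have h1 := hτ (τ.symm j)
    rw [Equiv.apply_symm_apply] at h1
    rw [h1]
    exact one_ne_zero
  have hcardim : J.card ≤ Kᶜ.card := by
    rw [← Finset.card_image_of_injective J τ.symm.injective]
    exact Finset.card_le_card hsub
  have hKc : Kᶜ.Nonempty := by
    obtain ⟨j, hj⟩ := hJ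
    exact ⟨τ.symm j, hsub (Finset.mem_image_of_mem τ.symm hj)⟩
  have := hfiX I Kᶜ hI hKc hXz
  omega


end S17

/-- For balanced bipartite graphs `G = (A, B, E)`, `H = (B, C, F)` with
reduced adjacency matrices `X`, `Y`, and their join `G * H` (reduced adjacency matrix
`boolProd X Y`): (i) if `G` and `H` are α⁺-stable then so is `G * H`; (ii) if one of
`G, H` is α⁺-stable and the other bistable bipartite, then `G * H` is bistable bipartite;
(iii) if `G` and `H` are bistable bipartite, then so is `G * H`. -/
theorem stmt_17 {n : ℕ} (X Y : Matrix (Fin n) (Fin n) ℕ)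
    (hX : ZeroOne X) (hY : ZeroOne Y) :
    (AlphaPlusStable (matGraph X) → AlphaPlusStable (matGraph Y) →
      AlphaPlusStable (matGraph (boolProd X Y))) ∧
    ((AlphaPlusStable (matGraph X) ∧
        BistableBipartite (matGraph Y)
          (Set.range Sum.inl : Set (Fin n ⊕ Fin n)) (Set.range Sum.inr)) ∨
      (BistableBipartite (matGraph X)
          (Set.range Sum.inl : Set (Fin n ⊕ Fin n)) (Set.range Sum.inr) ∧
        AlphaPlusStable (matGraph Y)) →
      BistableBipartite (matGraph (boolProd X Y))
        (Set.range Sum.inl : Set (Fin n ⊕ Fin n)) (Set.range Sum.inr)) ∧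
    (BistableBipartite (matGraph X)
        (Set.range Sum.inl : Set (Fin n ⊕ Fin n)) (Set.range Sum.inr) →
      BistableBipartite (matGraph Y)
        (Set.range Sum.inl : Set (Fin n ⊕ Fin n)) (Set.range Sum.inr) →
      BistableBipartite (matGraph (boolProd X Y))
        (Set.range Sum.inl : Set (Fin n ⊕ Fin n)) (Set.range Sum.inr)) := by
  refine ⟨?_, ?_, ?_⟩
  · intro hA hB
    exact S17.alphaPlus_of_hasPerm (S17.hasPerm_boolProd
      (S17.hasPerm_of_alphaPlus hX hA) (S17.hasPerm_of_alphaPlus hY hB))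
  · rintro (⟨hA, hBb⟩ | ⟨hAb, hB⟩)
    · exact S17.bistable_of_fi (S17.zeroOne_boolProd X Y)
        (S17.fi_boolProd_left hX hY (S17.fi_of_bistable hBb)
          (Or.inr (S17.hasPerm_of_alphaPlus hX hA)))
    · exact S17.bistable_of_fi (S17.zeroOne_boolProd X Y)
        (S17.fi_boolProd_right hX hY (S17.fi_of_bistable hAb)
          (S17.hasPerm_of_alphaPlus hY hB))
  · intro hXb hYb
    exact S17.bistable_of_fi (S17.zeroOne_boolProd X Y)
      (S17.fi_boolProd_left hX hY (S17.fi_of_bistable hYb)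
        (Or.inl (S17.fi_of_bistable hXb)))
end

section
/- Let X and Y be (0,1)-matrices of order n. If per(X) > 0 and Y is fully indecomposable, then the matrix product XY is fully indecomposable (i.e., XY has no k by n−k zero submatrix for any 1 ≤ k ≤ n−1). -/
open SimpleGraph

/-- If `X`, `Y` are (0,1)-matrices of order `n` with `per X > 0` and
`Y` fully indecomposable, then the matrix product `X * Y` is fully indecomposable (it has
no `k` by `n - k` zero submatrix). -/
theorem stmt_18 {n : ℕ} (X Y : Matrix (Fin n) (Fin n) ℕ)
    (hX : ZeroOne X) (hY : ZeroOne Y)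
    (hper : 0 < perm X) (hfi : FullyIndecomposable Y) :
    FullyIndecomposable (X * Y) := by
  -- Extract a permutation σ with X (σ i) i ≠ 0 for all i.
  obtain ⟨σ, hσ⟩ : ∃ σ : Equiv.Perm (Fin n), ∀ i, X (σ i) i ≠ 0 := by
    obtain ⟨σ, -, hσ⟩ := Finset.exists_ne_zero_of_sum_ne_zero (show (∑ σ : Equiv.Perm (Fin n), ∏ i, X (σ i) i) ≠ 0 from hper.ne')
    exact ⟨σ, fun i => Finset.prod_ne_zero_iff.1 hσ i (Finset.mem_univ i)⟩
  rintro (⟨hcard, hzero⟩ | ⟨R, C, hR, hC, hcard, hzero⟩)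
  · -- n = 1 case
    have hn : n = 1 := by simpa using hcard
    subst hn
    have hY0 : Y 0 0 ≠ 0 := by
      intro h
      exact hfi (Or.inl ⟨by simp, fun i j => by
        have : i = 0 := Subsingleton.elim i 0
        have : j = 0 := Subsingleton.elim j 0
        simp_all⟩)
    have hX0 : X 0 0 ≠ 0 := by
      have := hσ 0
      have h0 : σ 0 = 0 := Subsingleton.elim _ _
      rwa [h0] at this
    have := hzero 0 0
    rw [Matrix.mul_apply] at this
    simp only [Finset.univ_unique, Finset.sum_singleton] at this
    exact (mul_ne_zero hX0 hY0) (by simpa using this)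
  · -- zero submatrix case: pull back rows through σ
    apply hfi
    refine Or.inr ⟨R.image σ.symm, C, hR.image _, hC, ?_, ?_⟩
    · rwa [Finset.card_image_of_injective _ σ.symm.injective]
    · intro k hk j hj
      obtain ⟨i, hi, rfl⟩ := Finset.mem_image.1 hk
      have hXik : X i (σ.symm i) ≠ 0 := by
        have := hσ (σ.symm i)
        rwa [Equiv.apply_symm_apply] at this
      have h0 : (X * Y) i j = 0 := hzero i hi j hj
      rw [Matrix.mul_apply] at h0
      have := (Finset.sum_eq_zero_iff.1 h0) (σ.symm i) (Finset.mem_univ _)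
      exact (Nat.mul_eq_zero.1 this).resolve_left hXik
end

section
/- Let G=(A,B,E) be an α-stable balanced bipartite graph and H=(C,D,F) be an α⁺-stable balanced bipartite graph. Then their Kronecker product G⊗H=(A×C, B×D, U), where (a,c)(b,d) ∈ U iff ab ∈ E and cd ∈ F, is α-stable. -/
open SimpleGraph

namespace Stmt19
open Sum

/-! ### Basic facts about `stabNum` -/

section basics
variable {V : Type*}

lemma isStableSet_mono {G H : SimpleGraph V} (h : G ≤ H) {S : Set V}
    (hS : IsStableSet H S) : IsStableSet G S :=
  fun _ hu _ hv huv hadj => hS hu hv huv (h hadj)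

lemma bddAbove_stab [Fintype V] (G : SimpleGraph V) :
    BddAbove {k | ∃ S : Set V, IsStableSet G S ∧ S.ncard = k} := by
  refine ⟨Fintype.card V, fun k hk => ?_⟩
  obtain ⟨S, -, rfl⟩ := hk
  simpa [Set.ncard_univ, Nat.card_eq_fintype_card] using
    Set.ncard_le_ncard (Set.subset_univ S) Set.finite_univ

lemma stab_nonempty (G : SimpleGraph V) :
    {k | ∃ S : Set V, IsStableSet G S ∧ S.ncard = k}.Nonempty :=
  ⟨0, ∅, by simp [IsStableSet], by simp⟩

lemma le_stabNum [Fintype V] {G : SimpleGraph V} {S : Set V} (hS : IsStableSet G S) :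
    S.ncard ≤ stabNum G :=
  le_csSup (bddAbove_stab G) ⟨S, hS, rfl⟩

lemma stabNum_le [Fintype V] {G : SimpleGraph V} {k : ℕ}
    (h : ∀ S : Set V, IsStableSet G S → S.ncard ≤ k) : stabNum G ≤ k :=
  csSup_le (stab_nonempty G) (by rintro n ⟨S, hS, rfl⟩; exact h S hS)

lemma exists_maxStable [Fintype V] (G : SimpleGraph V) :
    ∃ S : Set V, IsStableSet G S ∧ S.ncard = stabNum G :=
  Nat.sSup_mem (stab_nonempty G) (bddAbove_stab G)

end basics

/-! ### Adjacency in `matGraph` -/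

section adj
variable {ι κ : Type*} (X : Matrix ι κ ℕ)

@[simp] lemma matGraph_adj_inl_inr {i : ι} {j : κ} :
    (matGraph X).Adj (inl i) (inr j) ↔ X i j = 1 := by
  simp [matGraph, SimpleGraph.fromRel_adj]

@[simp] lemma matGraph_adj_inl_inl {i j : ι} :
    ¬ (matGraph X).Adj (inl i) (inl j) := by
  simp [matGraph, SimpleGraph.fromRel_adj]

@[simp] lemma matGraph_adj_inr_inr {i j : κ} :
    ¬ (matGraph X).Adj (inr i) (inr j) := by
  simp [matGraph, SimpleGraph.fromRel_adj]

@[simp] lemma matGraph_adj_inr_inl {j : κ} {i : ι} :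
    (matGraph X).Adj (inr j) (inl i) ↔ X i j = 1 := by
  rw [SimpleGraph.adj_comm]; simp

lemma matGraph_edge {e : Sym2 (ι ⊕ κ)} (he : e ∈ (matGraph X).edgeSet) :
    ∃ i j, e = s(inl i, inr j) ∧ X i j = 1 := by
  induction e with
  | h u v =>
    rw [SimpleGraph.mem_edgeSet] at he
    cases u with
    | inl i => cases v with
      | inl j => simp at he
      | inr j => exact ⟨i, j, rfl, by simpa using he⟩
    | inr j => cases v with
      | inl i => exact ⟨i, j, Sym2.eq_swap, by simpa using he⟩
      | inr j' => simp at he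

end adj

/-! ### Stable sets in bipartite-type graphs on `ι ⊕ κ` -/

section stable
variable {ι κ : Type*}

lemma stable_union {H : SimpleGraph (ι ⊕ κ)} {A : Set ι} {B : Set κ}
    (h1 : ∀ i ∈ A, ∀ i' ∈ A, ¬H.Adj (inl i) (inl i'))
    (h2 : ∀ j ∈ B, ∀ j' ∈ B, ¬H.Adj (inr j) (inr j'))
    (h3 : ∀ i ∈ A, ∀ j ∈ B, ¬ H.Adj (inl i) (inr j)) :
    IsStableSet H (inl '' A ∪ inr '' B) := by
  rintro u (⟨i, hi, rfl⟩ | ⟨j, hj, rfl⟩) v (⟨i', hi', rfl⟩ | ⟨j', hj', rfl⟩) hne hadj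
  · exact h1 i hi i' hi' hadj
  · exact h3 i hi j' hj' hadj
  · exact h3 i' hi' j hj hadj.symm
  · exact h2 j hj j' hj' hadj

lemma sum_set_decomp (S : Set (ι ⊕ κ)) :
    S = inl '' (inl ⁻¹' S) ∪ inr '' (inr ⁻¹' S) := by
  ext x; cases x <;> simp

lemma ncard_union_lr [Fintype ι] [Fintype κ] (A : Set ι) (B : Set κ) :
    ((inl '' A ∪ inr '' B : Set (ι ⊕ κ))).ncard = A.ncard + B.ncard := by
  rw [Set.ncard_union_eq (by simp [Set.disjoint_left]) (Set.toFinite _) (Set.toFinite _),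
    Set.ncard_image_of_injective _ inl_injective, Set.ncard_image_of_injective _ inr_injective]

lemma ncard_sum_decomp [Fintype ι] [Fintype κ] (S : Set (ι ⊕ κ)) :
    S.ncard = (inl ⁻¹' S).ncard + (inr ⁻¹' S).ncard := by
  conv_lhs => rw [sum_set_decomp S]
  exact ncard_union_lr _ _

lemma ncard_compl [Fintype ι] (A : Set ι) : Aᶜ.ncard = Fintype.card ι - A.ncard := by
  have := Set.ncard_add_ncard_compl A (Set.toFinite _) (Set.toFinite _)
  rw [Nat.card_eq_fintype_card] at this
  omega

lemma ncard_le_card_fintype [Fintype ι] (A : Set ι) : A.ncard ≤ Fintype.card ι := by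
  simpa [Set.ncard_univ, Nat.card_eq_fintype_card] using
    Set.ncard_le_ncard (Set.subset_univ A) Set.finite_univ

/-- If the graph contains a "diagonal" matching given by a permutation, every stable
set has at most `card ι` elements. -/
lemma stable_ncard_le [Fintype ι] {H : SimpleGraph (ι ⊕ ι)} (σ : Equiv.Perm ι)
    (hσ : ∀ i, H.Adj (inl i) (inr (σ i))) {S : Set (ι ⊕ ι)} (hS : IsStableSet H S) :
    S.ncard ≤ Fintype.card ι := by
  have hsub : (inr ⁻¹' S : Set ι) ⊆ ((σ '' (inl ⁻¹' S)))ᶜ := by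
    rintro j hj ⟨i, hi, rfl⟩
    exact hS hi hj (by simp) (hσ i)
  have h1 : (inr ⁻¹' S : Set ι).ncard ≤ ((σ '' (inl ⁻¹' S)))ᶜ.ncard :=
    Set.ncard_le_ncard hsub (Set.toFinite _)
  have h2 : (σ '' (inl ⁻¹' S)).ncard + ((σ '' (inl ⁻¹' S)))ᶜ.ncard = Fintype.card ι := by
    rw [Set.ncard_add_ncard_compl, Nat.card_eq_fintype_card]
  have h3 : (σ '' (inl ⁻¹' S)).ncard = (inl ⁻¹' S : Set ι).ncard :=
    Set.ncard_image_of_injective _ σ.injective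
  have h4 : (inl ⁻¹' S : Set ι).ncard ≤ Fintype.card ι := ncard_le_card_fintype _
  rw [ncard_sum_decomp S]
  omega

end stable

/-! ### The neighbourhood function and the deficiency argument -/

section gam
variable {ι : Type*} [Fintype ι] [DecidableEq ι]

/-- Set of columns having a `1` in some row of `P`. -/
def Gam (X : Matrix ι ι ℕ) (P : Set ι) : Set ι := {j | ∃ i ∈ P, X i j = 1}

lemma Gam_mono (X : Matrix ι ι ℕ) {P Q : Set ι} (h : P ⊆ Q) : Gam X P ⊆ Gam X Q := by
  rintro j ⟨i, hi, hij⟩; exact ⟨i, h hi, hij⟩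

lemma Gam_union (X : Matrix ι ι ℕ) (P Q : Set ι) :
    Gam X (P ∪ Q) = Gam X P ∪ Gam X Q := by
  ext j; simp only [Gam, Set.mem_union, Set.mem_setOf_eq]; aesop

lemma Gam_inter_subset (X : Matrix ι ι ℕ) (P Q : Set ι) :
    Gam X (P ∩ Q) ⊆ Gam X P ∩ Gam X Q :=
  Set.subset_inter (Gam_mono X Set.inter_subset_left) (Gam_mono X Set.inter_subset_right)

/-- The canonical stable set attached to a set of rows. -/
lemma stable_rows_gam (X : Matrix ι ι ℕ) (P : Set ι) :
    IsStableSet (matGraph X) (inl '' P ∪ inr '' (Gam X P)ᶜ) := by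
  refine stable_union (by simp) (by simp) ?_
  intro i hi j hj hadj
  exact hj ⟨i, hi, by simpa using hadj⟩

/-- Basic deficiency bound: `|P| ≤ (α - n) + |Γ(P)|`. -/
lemma gam_card_bound (X : Matrix ι ι ℕ) (P : Set ι) :
    P.ncard + Fintype.card ι ≤ stabNum (matGraph X) + (Gam X P).ncard := by
  have h := le_stabNum (G := matGraph X) (stable_rows_gam X P)
  rw [ncard_union_lr, ncard_compl] at h
  have h2 := ncard_le_card_fintype (Gam X P)
  omega

/-- Any stable set's column part avoids the neighbourhood of its row part. -/
lemma col_subset_compl {X : Matrix ι ι ℕ} {S : Set (ι ⊕ ι)}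
    (hS : IsStableSet (matGraph X) S) :
    (inr ⁻¹' S : Set ι) ⊆ (Gam X (inl ⁻¹' S))ᶜ := by
  rintro j hj ⟨i, hi, hij⟩
  exact hS hi hj (by simp) (by simpa using hij)

/-- **Step 1**: an α⁺-stable `matGraph` has stability number `card ι`. -/
theorem stabNum_eq_card (X : Matrix ι ι ℕ) (hp : AlphaPlusStable (matGraph X)) :
    stabNum (matGraph X) = Fintype.card ι := by
  set N := Fintype.card ι with hN
  -- lower bound
  have hge : N ≤ stabNum (matGraph X) := by
    have h := le_stabNum (G := matGraph X) (stable_rows_gam X ∅)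
    rw [ncard_union_lr, ncard_compl] at h
    simp only [Set.ncard_empty] at h
    have : Gam X (∅ : Set ι) = ∅ := by
      ext j; simp [Gam]
    rw [this] at h
    simpa using h
  by_contra hne
  have hgt : ∃ d, 0 < d ∧ stabNum (matGraph X) = N + d := by
    refine ⟨stabNum (matGraph X) - N, by omega, by omega⟩
  obtain ⟨d, hd0, hα⟩ := hgt
  -- the family of maximally deficient row sets
  set D : Set (Set ι) := {P | P.ncard = d + (Gam X P).ncard} with hD
  have bound : ∀ P : Set ι, P.ncard ≤ d + (Gam X P).ncard := by
    intro P
    have := gam_card_bound X P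
    omega
  -- a maximum stable set gives a member of `D`, with forced column part
  have maxStable_mem : ∀ S : Set (ι ⊕ ι), IsStableSet (matGraph X) S → S.ncard = N + d →
      (inl ⁻¹' S) ∈ D ∧ (inr ⁻¹' S : Set ι) = (Gam X (inl ⁻¹' S))ᶜ := by
    intro S hS hcard
    have hdec := ncard_sum_decomp S
    have hsub := col_subset_compl hS
    have hle : (inr ⁻¹' S : Set ι).ncard ≤ ((Gam X (inl ⁻¹' S))ᶜ).ncard :=
      Set.ncard_le_ncard hsub (Set.toFinite _)
    have hcompl : ((Gam X (inl ⁻¹' S))ᶜ).ncard = N - (Gam X (inl ⁻¹' S)).ncard :=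
      ncard_compl _
    have hb := bound (inl ⁻¹' S)
    have hgam_le := ncard_le_card_fintype (Gam X (inl ⁻¹' S))
    constructor
    · simp only [hD, Set.mem_setOf_eq]; omega
    · refine Set.eq_of_subset_of_ncard_le hsub ?_ (Set.toFinite _)
      omega
  -- D is closed under unions and intersections
  have closed : ∀ P ∈ D, ∀ Q ∈ D, (P ∩ Q) ∈ D ∧ (P ∪ Q) ∈ D := by
    intro P hP Q hQ
    simp only [hD, Set.mem_setOf_eq] at hP hQ ⊢
    have h1 : (P ∪ Q).ncard + (P ∩ Q).ncard = P.ncard + Q.ncard :=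
      Set.ncard_union_add_ncard_inter P Q (Set.toFinite _) (Set.toFinite _)
    have h2 : (Gam X P ∪ Gam X Q).ncard + (Gam X P ∩ Gam X Q).ncard
        = (Gam X P).ncard + (Gam X Q).ncard :=
      Set.ncard_union_add_ncard_inter _ _ (Set.toFinite _) (Set.toFinite _)
    have h3 : (Gam X (P ∪ Q)).ncard = (Gam X P ∪ Gam X Q).ncard := by
      rw [Gam_union]
    have h4 : (Gam X (P ∩ Q)).ncard ≤ (Gam X P ∩ Gam X Q).ncard :=
      Set.ncard_le_ncard (Gam_inter_subset X P Q) (Set.toFinite _)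
    have h5 := bound (P ∪ Q)
    have h6 := bound (P ∩ Q)
    omega
  -- D is nonempty
  have Dne : D.Nonempty := by
    obtain ⟨S, hS, hcard⟩ := exists_maxStable (matGraph X)
    exact ⟨_, (maxStable_mem S hS (by omega)).1⟩
  -- minimal and maximal elements of D
  have cards_ne : (Set.ncard '' D).Nonempty := Dne.image _
  have cards_bdd : BddAbove (Set.ncard '' D) := by
    refine ⟨N, ?_⟩
    rintro k ⟨P, -, rfl⟩
    exact ncard_le_card_fintype P
  obtain ⟨Pmin, hPminD, hPmin⟩ : ∃ P ∈ D, P.ncard = sInf (Set.ncard '' D) := by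
    have := Nat.sInf_mem cards_ne
    obtain ⟨P, hP, hP2⟩ := this
    exact ⟨P, hP, hP2⟩
  obtain ⟨Pmax, hPmaxD, hPmax⟩ : ∃ P ∈ D, P.ncard = sSup (Set.ncard '' D) := by
    have := Nat.sSup_mem cards_ne cards_bdd
    obtain ⟨P, hP, hP2⟩ := this
    exact ⟨P, hP, hP2⟩
  -- Pmin is contained in every member of D, every member is contained in Pmax
  have hmin_sub : ∀ P ∈ D, Pmin ⊆ P := by
    intro P hP
    obtain ⟨hint, -⟩ := closed Pmin hPminD P hP
    have h1 : (Pmin ∩ P).ncard ≤ Pmin.ncard :=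
      Set.ncard_le_ncard Set.inter_subset_left (Set.toFinite _)
    have h2 : Pmin.ncard ≤ (Pmin ∩ P).ncard := by
      rw [hPmin]
      exact Nat.sInf_le ⟨_, hint, rfl⟩
    have := Set.eq_of_subset_of_ncard_le (Set.inter_subset_left (s := Pmin) (t := P)) h2
      (Set.toFinite _)
    rw [← this]
    exact Set.inter_subset_right
  have hsub_max : ∀ P ∈ D, P ⊆ Pmax := by
    intro P hP
    obtain ⟨-, huni⟩ := closed Pmax hPmaxD P hP
    have h1 : Pmax.ncard ≤ (Pmax ∪ P).ncard :=
      Set.ncard_le_ncard Set.subset_union_left (Set.toFinite _)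
    have h2 : (Pmax ∪ P).ncard ≤ Pmax.ncard := by
      rw [hPmax]
      exact le_csSup cards_bdd ⟨_, huni, rfl⟩
    have := Set.eq_of_subset_of_ncard_le (Set.subset_union_left (s := Pmax) (t := P)) h2
      (Set.toFinite _)
    rw [this]
    exact Set.subset_union_right
  -- pick the two vertices
  have hPminCard : Pmin.ncard = d + (Gam X Pmin).ncard := hPminD
  have hPmin_ne : Pmin.Nonempty := by
    rw [Set.nonempty_iff_ne_empty]
    intro h
    rw [h, Set.ncard_empty] at hPminCard
    omega
  obtain ⟨x, hx⟩ := hPmin_ne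
  have hPmaxCard : Pmax.ncard = d + (Gam X Pmax).ncard := hPmaxD
  have hGmax_lt : (Gam X Pmax).ncard < N := by
    have := ncard_le_card_fintype Pmax
    omega
  have hy : ((Gam X Pmax)ᶜ : Set ι).Nonempty := by
    rw [Set.nonempty_iff_ne_empty]
    intro h
    have h2 := ncard_compl (ι := ι) (Gam X Pmax)
    rw [h, Set.ncard_empty] at h2
    omega
  obtain ⟨y, hy⟩ := hy
  -- x, y are nonadjacent
  have hxy : ¬ (matGraph X).Adj (inl x) (inr y) := by
    simp only [matGraph_adj_inl_inr]
    intro h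
    exact hy ⟨x, hmin_sub Pmax hPmaxD hx, h⟩
  -- apply α⁺-stability at (inl x, inr y)
  have := hp (inl x) (inr y) (by simp) hxy
  obtain ⟨S', hS', hcard'⟩ := exists_maxStable (matGraph X ⊔ fromEdgeSet {s(inl x, inr y)})
  rw [this] at hcard'
  have hS'X : IsStableSet (matGraph X) S' := isStableSet_mono le_sup_left hS'
  obtain ⟨hPD, hC⟩ := maxStable_mem S' hS'X (by omega)
  -- inl x ∈ S' and inr y ∈ S'
  have hxS : (inl x : ι ⊕ ι) ∈ S' := hmin_sub _ hPD hx
  have hyS : (inr y : ι ⊕ ι) ∈ S' := by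
    have hsub : ((Gam X Pmax)ᶜ : Set ι) ⊆ (Gam X (inl ⁻¹' S'))ᶜ :=
      Set.compl_subset_compl.mpr (Gam_mono X (hsub_max _ hPD))
    have : y ∈ (inr ⁻¹' S' : Set ι) := by rw [hC]; exact hsub hy
    exact this
  -- contradiction: they are adjacent in the augmented graph
  have hadj : (matGraph X ⊔ fromEdgeSet {s(inl x, inr y)}).Adj (inl x) (inr y) := by
    right
    rw [SimpleGraph.fromEdgeSet_adj]
    exact ⟨rfl, by simp⟩
  exact hS' hxS hyS (by simp) hadj

end gam

/-! ### Hall's theorem: extracting permutation diagonals -/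

section hall
variable {ι : Type*} [Fintype ι] [DecidableEq ι]

lemma hall_perm (X : Matrix ι ι ℕ)
    (h : ∀ P : Set ι, P.ncard ≤ (Gam X P).ncard) :
    ∃ σ : Equiv.Perm ι, ∀ i, X i (σ i) = 1 := by
  have key : ∀ s : Finset ι,
      s.card ≤ (s.biUnion (fun i => Finset.univ.filter (fun j => X i j = 1))).card := by
    intro s
    have h1 := h ↑s
    have h2 : Gam X ↑s = ↑(s.biUnion fun i => Finset.univ.filter fun j => X i j = 1) := by
      ext j; simp [Gam]
    rw [h2, Set.ncard_coe_finset, Set.ncard_coe_finset] at h1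
    exact h1
  obtain ⟨f, hfinj, hf⟩ := (Finset.all_card_le_biUnion_card_iff_exists_injective _).mp key
  refine ⟨Equiv.ofBijective f (Finite.injective_iff_bijective.mp hfinj), fun i => ?_⟩
  simpa using hf i

/-- Hall's condition from an upper bound on the stability number. -/
lemma hall_of_stab (X : Matrix ι ι ℕ) (H : SimpleGraph (ι ⊕ ι))
    (h1 : ∀ i i', ¬H.Adj (inl i) (inl i'))
    (h2 : ∀ j j', ¬H.Adj (inr j) (inr j'))
    (h3 : ∀ i j, ¬ X i j = 1 → ¬ H.Adj (inl i) (inr j))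
    (hub : stabNum H ≤ Fintype.card ι) :
    ∀ P : Set ι, P.ncard ≤ (Gam X P).ncard := by
  intro P
  by_contra hlt
  push_neg at hlt
  have hstable : IsStableSet H (inl '' P ∪ inr '' (Gam X P)ᶜ) := by
    refine stable_union (fun i _ i' _ => h1 i i') (fun j _ j' _ => h2 j j') ?_
    intro i hi j hj
    exact h3 i j (fun hx => hj ⟨i, hi, hx⟩)
  have hle := le_stabNum hstable
  rw [ncard_union_lr, ncard_compl] at hle
  have hg := ncard_le_card_fintype (Gam X P)
  have hP := ncard_le_card_fintype P
  omega

/-- From an α-number equal to `card ι`, get a permutation diagonal. -/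
lemma dg_of (X : Matrix ι ι ℕ) (hub : stabNum (matGraph X) ≤ Fintype.card ι) :
    ∃ σ : Equiv.Perm ι, ∀ i, X i (σ i) = 1 :=
  hall_perm X (hall_of_stab X (matGraph X) (by simp) (by simp)
    (fun i j h => by simpa using h) hub)

/-- From α⁻-stability, get avoiding diagonals. -/
lemma av_of (X : Matrix ι ι ℕ) (heq : stabNum (matGraph X) = Fintype.card ι)
    (hm : AlphaMinusStable (matGraph X)) :
    ∀ i j, X i j = 1 → ∃ σ : Equiv.Perm ι, (∀ k, X k (σ k) = 1) ∧ σ i ≠ j := by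
  intro i j hij
  have he : s(inl i, inr j) ∈ (matGraph X).edgeSet := by
    rw [SimpleGraph.mem_edgeSet]; simpa using hij
  have hdel := hm _ he
  set X' : Matrix ι ι ℕ := fun a b => if a = i ∧ b = j then 0 else X a b with hX'
  have hmem : ∀ a b, s(inl a, inr b) = s(inl i, inr j) ↔ (a = i ∧ b = j) := by
    intro a b
    rw [Sym2.eq_iff]
    constructor
    · rintro (⟨h1, h2⟩ | ⟨h1, h2⟩)
      · exact ⟨inl_injective h1, inr_injective h2⟩
      · exact absurd h1 (by simp)
    · rintro ⟨rfl, rfl⟩; left; exact ⟨rfl, rfl⟩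
  have hhall := hall_of_stab X' ((matGraph X).deleteEdges {s(inl i, inr j)})
    (by simp) (by simp) ?_ ?_
  · obtain ⟨σ, hσ⟩ := hall_perm X' hhall
    have hval : ∀ k, ¬(k = i ∧ σ k = j) ∧ X k (σ k) = 1 := by
      intro k
      have h := hσ k
      rw [hX'] at h
      simp only at h
      by_cases hk : k = i ∧ σ k = j
      · rw [if_pos hk] at h
        exact absurd h (by norm_num)
      · rw [if_neg hk] at h
        exact ⟨hk, h⟩
    refine ⟨σ, fun k => (hval k).2, fun h => (hval i).1 ⟨rfl, h⟩⟩
  · intro a b hab hadj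
    rw [SimpleGraph.deleteEdges_adj] at hadj
    obtain ⟨hadj1, hadj2⟩ := hadj
    by_cases hcase : a = i ∧ b = j
    · exact hadj2 (by rw [Set.mem_singleton_iff, hmem]; exact hcase)
    · rw [hX'] at hab
      simp only at hab
      rw [if_neg hcase] at hab
      exact hab (by simpa using hadj1)
  · rw [hdel, heq]

end hall

/-! ### Sufficiency: diagonals give α-stability -/

section suff
variable {ι : Type*} [Fintype ι] [DecidableEq ι]

lemma card_le_stabNum (H : SimpleGraph (ι ⊕ ι))
    (h1 : ∀ i i', ¬H.Adj (inl i) (inl i')) :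
    Fintype.card ι ≤ stabNum H := by
  have hstable : IsStableSet H (inl '' (Set.univ : Set ι) ∪ inr '' (∅ : Set ι)) :=
    stable_union (fun i _ i' _ => h1 i i') (by simp) (by simp)
  have hle := le_stabNum hstable
  rw [ncard_union_lr] at hle
  simpa [Set.ncard_univ, Nat.card_eq_fintype_card] using hle

lemma card_le_stabNum' (H : SimpleGraph (ι ⊕ ι))
    (h2 : ∀ j j', ¬H.Adj (inr j) (inr j')) :
    Fintype.card ι ≤ stabNum H := by
  have hstable : IsStableSet H (inl '' (∅ : Set ι) ∪ inr '' (Set.univ : Set ι)) :=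
    stable_union (by simp) (fun j _ j' _ => h2 j j') (by simp)
  have hle := le_stabNum hstable
  rw [ncard_union_lr] at hle
  simpa [Set.ncard_univ, Nat.card_eq_fintype_card] using hle

theorem alphaStable_of (X : Matrix ι ι ℕ)
    (hdg : ∃ σ : Equiv.Perm ι, ∀ i, X i (σ i) = 1)
    (hav : ∀ i j, X i j = 1 → ∃ σ : Equiv.Perm ι, (∀ k, X k (σ k) = 1) ∧ σ i ≠ j) :
    AlphaStable (matGraph X) := by
  obtain ⟨σ0, hσ0⟩ := hdg
  have hstabeq : stabNum (matGraph X) = Fintype.card ι :=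
    le_antisymm
      (stabNum_le fun S hS => stable_ncard_le σ0 (fun i => by simp [hσ0 i]) hS)
      (card_le_stabNum _ (by simp))
  constructor
  · -- α⁺
    intro x y hne hnadj
    rw [hstabeq]
    refine le_antisymm (stabNum_le fun S hS => stable_ncard_le σ0
      (fun i => by simp [hσ0 i]) (isStableSet_mono le_sup_left hS)) ?_
    cases x with
    | inl x0 =>
      refine card_le_stabNum' _ fun j j' hadj => ?_
      rcases hadj with hadj | hadj
      · exact matGraph_adj_inr_inr X hadj
      · rw [SimpleGraph.fromEdgeSet_adj, Set.mem_singleton_iff, Sym2.eq_iff] at hadj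
        rcases hadj.1 with ⟨h1, -⟩ | ⟨-, h2⟩
        · exact absurd h1.symm (by simp)
        · exact absurd h2.symm (by simp)
    | inr x0 =>
      refine card_le_stabNum _ fun j j' hadj => ?_
      rcases hadj with hadj | hadj
      · exact matGraph_adj_inl_inl X hadj
      · rw [SimpleGraph.fromEdgeSet_adj, Set.mem_singleton_iff, Sym2.eq_iff] at hadj
        rcases hadj.1 with ⟨h1, -⟩ | ⟨-, h2⟩
        · exact absurd h1.symm (by simp)
        · exact absurd h2.symm (by simp)
  · -- α⁻
    intro e he
    obtain ⟨i, j, rfl, hij⟩ := matGraph_edge X he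
    rw [hstabeq]
    obtain ⟨σ, hσ, hσne⟩ := hav i j hij
    refine le_antisymm (stabNum_le fun S hS => stable_ncard_le σ ?_ hS) ?_
    · intro k
      rw [SimpleGraph.deleteEdges_adj]
      refine ⟨by simp [hσ k], ?_⟩
      rw [Set.mem_singleton_iff, Sym2.eq_iff]
      rintro (⟨h1, h2⟩ | ⟨h1, -⟩)
      · exact hσne (by rw [← inl_injective h1]; exact inr_injective h2)
      · exact absurd h1 (by simp)
    · exact card_le_stabNum _ (by simp)

end suff

end Stmt19

/-- If `G` is an α-stable balanced bipartite graph (reduced adjacency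
matrix `X`) and `H` is an α⁺-stable balanced bipartite graph (reduced adjacency matrix
`Y`), then their Kronecker product `G ⊗ H`, whose reduced adjacency matrix is the
Kronecker product of `X` and `Y`, is α-stable. -/
theorem stmt_19 {n m : ℕ} (X : Matrix (Fin n) (Fin n) ℕ) (Y : Matrix (Fin m) (Fin m) ℕ)
    (hX : ZeroOne X) (hY : ZeroOne Y)
    (hG : AlphaStable (matGraph X)) (hH : AlphaPlusStable (matGraph Y)) :
    AlphaStable (matGraph (Matrix.kroneckerMap (· * ·) X Y)) := by
  have hGa := Stmt19.stabNum_eq_card X hG.1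
  have hAvX := Stmt19.av_of X hGa hG.2
  have hHa := Stmt19.stabNum_eq_card Y hH
  obtain ⟨τ, hτ⟩ := Stmt19.dg_of Y hHa.le
  obtain ⟨σ, hσ⟩ := Stmt19.dg_of X hGa.le
  apply Stmt19.alphaStable_of
  · exact ⟨Equiv.prodCongr σ τ, fun p => by
      simp [Matrix.kroneckerMap_apply, Equiv.prodCongr_apply, hσ, hτ]⟩
  · rintro ⟨i, k⟩ ⟨j, l⟩ hz
    rw [Matrix.kroneckerMap_apply] at hz
    have hx : X i j = 1 := Nat.eq_one_of_mul_eq_one_right hz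
    have hy : Y k l = 1 := Nat.eq_one_of_mul_eq_one_left hz
    obtain ⟨σ', hσ', hσne⟩ := hAvX i j hx
    refine ⟨Equiv.prodCongr σ' τ, fun p => by
      simp [Matrix.kroneckerMap_apply, Equiv.prodCongr_apply, hσ', hτ], ?_⟩
    intro h
    simp only [Equiv.prodCongr_apply, Prod.map, Prod.mk.injEq] at h
    exact hσne h.1
end
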